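/- arXiv:2402.16066 — 5 statements merged into one kernel-verified Lean document; each statement's English description precedes it below -/
import Mathlib

section
/- Let G be a locally linear graph and u a vertex with G[N(u)] equal to the induced path v_1 v_2 ... v_t. If v is a vertex nonadjacent to u with N(v) ⊆ N(u) and deg(v) ≥ 2, then there exists an index i with 1 ≤ i ≤ t−1 such that both v_i and v_{i+1} are neighbors of v. -/
/-- A graph is locally linear (in the sense of this paper) if the neighborhood
of every vertex induces a path. -/
def LocallyPath {V : Type*} (G : SimpleGraph V) : Prop :=
  ∀ v : V, ∃ n : ℕ,
    Nonempty ((G.induce (G.neighborSet v)) ≃g SimpleGraph.pathGraph (n + 1))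

/-- Observation (1): if `v` is nonadjacent to `u`, all its neighbors lie in `N(u)`
(whose induced subgraph is the path `w 0 - w 1 - ⋯ - w (t-1)`), and `deg v ≥ 2`,
then `v` has two consecutive neighbors on the path. -/
theorem stmt_1 {V : Type*} [Fintype V] (G : SimpleGraph V) [DecidableRel G.Adj]
    (hG : LocallyPath G) (u : V) (t : ℕ) (w : Fin t → V)
    (hinj : Function.Injective w)
    (hrange : Set.range w = G.neighborSet u)
    (hpath : ∀ i j : Fin t, G.Adj (w i) (w j) ↔ ((i : ℕ) + 1 = j ∨ (j : ℕ) + 1 = i))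
    (x : V) (hxu : ¬ G.Adj u x) (hxne : x ≠ u)
    (hsub : G.neighborSet x ⊆ G.neighborSet u)
    (hdeg : 2 ≤ G.degree x) :
    ∃ i j : Fin t, (i : ℕ) + 1 = j ∧ G.Adj x (w i) ∧ G.Adj x (w j) := by
  obtain ⟨n, ⟨e⟩⟩ := hG x
  -- card of neighborSet x = n + 1
  have hcard : Fintype.card (G.neighborSet x) = n + 1 := by
    have := Fintype.card_congr e.toEquiv
    simpa using this
  have hn : 1 ≤ n := by
    have h2 : 2 ≤ Fintype.card (G.neighborSet x) := by
      rwa [G.card_neighborSet_eq_degree]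
    omega
  -- two adjacent vertices in the path graph
  have hadj01 : (SimpleGraph.pathGraph (n + 1)).Adj ⟨0, by omega⟩ ⟨1, by omega⟩ := by
    rw [SimpleGraph.pathGraph_adj]; left; rfl
  set a : G.neighborSet x := e.symm ⟨0, by omega⟩
  set b : G.neighborSet x := e.symm ⟨1, by omega⟩
  have hab : (G.induce (G.neighborSet x)).Adj a b := by
    have := e.symm.map_adj_iff.mpr hadj01
    exact this
  have hGab : G.Adj (a : V) (b : V) := hab
  have hxa : G.Adj x (a : V) := a.2
  have hxb : G.Adj x (b : V) := b.2
  have hau : (a : V) ∈ G.neighborSet u := hsub a.2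
  have hbu : (b : V) ∈ G.neighborSet u := hsub b.2
  rw [← hrange] at hau hbu
  obtain ⟨i, hi⟩ := hau
  obtain ⟨j, hj⟩ := hbu
  have := (hpath i j).mp (by rw [hi, hj]; exact hGab)
  rcases this with h | h
  · exact ⟨i, j, h, by rwa [hi], by rwa [hj]⟩
  · exact ⟨j, i, h, by rwa [hj], by rwa [hi]⟩
end

section
/- Let G be a locally linear graph and u a vertex with G[N(u)] equal to the induced path v_1 v_2 ... v_t. Suppose x and y are adjacent vertices, both nonadjacent to u, with N({x,y}) \ {x,y} ⊆ N(u), and x,y each have a neighbor outside {x,y}. Then there exists an index i with 1 ≤ i ≤ t−1 such that the induced subgraph on {v_i, v_{i+1}, x, y} is a diamond (K_4 minus one edge). -/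
/-- The diamond: `K₄` minus the edge between vertices `0` and `1`. -/
def diamondGraph : SimpleGraph (Fin 4) :=
  SimpleGraph.fromEdgeSet {s(0, 2), s(0, 3), s(1, 2), s(1, 3), s(2, 3)}

/-- Every vertex of a path on at least two vertices has a neighbour. -/
lemma path_nbr {n : ℕ} (hn : 1 ≤ n) (v : Fin (n+1)) :
    ∃ q, (SimpleGraph.pathGraph (n+1)).Adj v q := by
  by_cases h : (v : ℕ) = 0
  · exact ⟨⟨1, by omega⟩, by simp [SimpleGraph.pathGraph_adj, h]⟩
  · exact ⟨⟨(v : ℕ) - 1, by omega⟩, by simp [SimpleGraph.pathGraph_adj]; omega⟩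

/-- In a path on at least three vertices, next to any edge `a-b` there is a
vertex adjacent to exactly one of `a`, `b`. -/
lemma find_q (n a b : ℕ) (hn : 3 ≤ n) (ha : a < n) (hb : b < n)
    (hadj : a + 1 = b ∨ b + 1 = a) :
    ∃ q < n, q ≠ a ∧ q ≠ b ∧
      (((q+1 = a ∨ a+1 = q) ∧ ¬(q+1 = b ∨ b+1 = q)) ∨
       ((q+1 = b ∨ b+1 = q) ∧ ¬(q+1 = a ∨ a+1 = q))) := by
  rcases hadj with h | h
  · rcases Nat.eq_zero_or_pos a with h0 | h0
    · exact ⟨b+1, by omega, by omega, by omega, Or.inr ⟨by omega, by omega⟩⟩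
    · exact ⟨a-1, by omega, by omega, by omega, Or.inl ⟨by omega, by omega⟩⟩
  · rcases Nat.eq_zero_or_pos b with h0 | h0
    · exact ⟨a+1, by omega, by omega, by omega, Or.inl ⟨by omega, by omega⟩⟩
    · exact ⟨b-1, by omega, by omega, by omega, Or.inr ⟨by omega, by omega⟩⟩

/-- Transfer of adjacency along an isomorphism with a path graph. -/
lemma induce_adj_iff {V : Type*} {G : SimpleGraph V} {s : Set V} {n : ℕ}
    (e : (G.induce s) ≃g SimpleGraph.pathGraph n) (q : Fin n) (b : V) (hb : b ∈ s) :
    (SimpleGraph.pathGraph n).Adj q (e ⟨b, hb⟩) ↔ G.Adj (↑(e.symm q)) b := by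
  conv_lhs => rw [← e.apply_symm_apply q]
  rw [e.map_adj_iff]
  simp [SimpleGraph.comap_adj]

/-- Four vertices with the right adjacencies induce a diamond. -/
lemma diamond_helper {V : Type*} (G : SimpleGraph V) (a b c d : V)
    (hab : a ≠ b) (hac : a ≠ c) (had : a ≠ d) (hbc : b ≠ c) (hbd : b ≠ d) (hcd : c ≠ d)
    (nab : ¬ G.Adj a b) (eac : G.Adj a c) (ead : G.Adj a d)
    (ebc : G.Adj b c) (ebd : G.Adj b d) (ecd : G.Adj c d) :
    Nonempty ((G.induce {a, b, c, d}) ≃g diamondGraph) := by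
  classical
  have ha : a ∈ ({a,b,c,d} : Set V) := by simp
  have hb : b ∈ ({a,b,c,d} : Set V) := by simp
  have hc : c ∈ ({a,b,c,d} : Set V) := by simp
  have hd : d ∈ ({a,b,c,d} : Set V) := by simp
  let f : Fin 4 → ↥({a,b,c,d} : Set V) := ![⟨a, ha⟩, ⟨b, hb⟩, ⟨c, hc⟩, ⟨d, hd⟩]
  have hbij : Function.Bijective f := by
    constructor
    · intro i j hij
      fin_cases i <;> fin_cases j <;>
        simp_all [f, Subtype.ext_iff] <;> simp_all [eq_comm]
    · rintro ⟨z, hz⟩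
      rcases hz with rfl | rfl | rfl | rfl
      · exact ⟨0, rfl⟩
      · exact ⟨1, rfl⟩
      · exact ⟨2, rfl⟩
      · exact ⟨3, rfl⟩
  have nba : ¬ G.Adj b a := fun h => nab h.symm
  refine ⟨RelIso.symm ⟨Equiv.ofBijective f hbij, ?_⟩⟩
  intro i j
  fin_cases i <;> fin_cases j <;>
    simp [f, Equiv.ofBijective, diamondGraph, SimpleGraph.comap_adj,
      SimpleGraph.fromEdgeSet_adj, Sym2.eq_iff, eac, ead, ebc, ebd, ecd,
      eac.symm, ead.symm, ebc.symm, ebd.symm, ecd.symm, nab, nba, G.irrefl]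

lemma set_perm1 {V : Type*} (a b c d : V) : ({a,b,c,d} : Set V) = {a,d,b,c} := by
  ext r; simp; tauto

lemma set_perm2 {V : Type*} (a b c d : V) : ({a,b,c,d} : Set V) = {b,d,a,c} := by
  ext r; simp; tauto

lemma set_perm3 {V : Type*} (a b c d : V) : ({a,b,c,d} : Set V) = {a,c,b,d} := by
  ext r; simp; tauto

lemma set_perm4 {V : Type*} (a b c d : V) : ({a,b,c,d} : Set V) = {b,c,a,d} := by
  ext r; simp; tauto

set_option maxHeartbeats 1000000 in
/-- Observation (2): if `x ↔ y` are both nonadjacent to `u`, all their neighbors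
outside `{x, y}` lie in `N(u)` (whose induced subgraph is the path
`w 0 - ⋯ - w (t-1)`), and each of `x, y` has a neighbor outside `{x, y}`, then
some pair of consecutive path vertices forms a diamond with `x` and `y`. -/
theorem stmt_2 {V : Type*} [Fintype V] (G : SimpleGraph V)
    (hconn : G.Connected) (hG : LocallyPath G)
    (u : V) (t : ℕ) (w : Fin t → V)
    (hinj : Function.Injective w)
    (hrange : Set.range w = G.neighborSet u)
    (hpath : ∀ i j : Fin t, G.Adj (w i) (w j) ↔ ((i : ℕ) + 1 = j ∨ (j : ℕ) + 1 = i))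
    (x y : V) (hxy : G.Adj x y)
    (hxu : ¬ G.Adj u x) (hyu : ¬ G.Adj u y) (hxne : x ≠ u) (hyne : y ≠ u)
    (hsub : (G.neighborSet x ∪ G.neighborSet y) \ {x, y} ⊆ G.neighborSet u)
    (hx : ∃ z, G.Adj x z ∧ z ≠ y) (hy : ∃ z, G.Adj y z ∧ z ≠ x) :
    ∃ i j : Fin t, (i : ℕ) + 1 = j ∧
      Nonempty ((G.induce {w i, w j, x, y}) ≃g diamondGraph) := by
  classical
  -- every w j is distinct from x and y
  have hwx : ∀ j : Fin t, w j ≠ x := by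
    intro j h
    have hj : w j ∈ G.neighborSet u := hrange ▸ Set.mem_range_self j
    rw [h] at hj
    exact hxu hj
  have hwy : ∀ j : Fin t, w j ≠ y := by
    intro j h
    have hj : w j ∈ G.neighborSet u := hrange ▸ Set.mem_range_self j
    rw [h] at hj
    exact hyu hj
  obtain ⟨z, hxz, hzy⟩ := hx
  have hyNx : y ∈ G.neighborSet x := hxy
  have hzNx : z ∈ G.neighborSet x := hxz
  -- Step 1: find a common neighbor `w m` of `x` and `y`.
  obtain ⟨n, ⟨e⟩⟩ := hG x
  have hzy' : (⟨y, hyNx⟩ : ↥(G.neighborSet x)) ≠ ⟨z, hzNx⟩ := by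
    simp only [ne_eq, Subtype.mk.injEq]
    exact fun h => hzy h.symm
  have hn : 1 ≤ n := by
    by_contra h
    push_neg at h
    interval_cases n
    have hss : Subsingleton (Fin (0 + 1)) := ⟨fun a b => Fin.ext (by omega)⟩
    exact hzy' (e.injective (hss.elim _ _))
  obtain ⟨q, hq⟩ := path_nbr hn (e ⟨y, hyNx⟩)
  have hpy : G.Adj (↑(e.symm q)) y := (induce_adj_iff e q y hyNx).mp hq.symm
  have hpx : G.Adj x ↑(e.symm q) := (e.symm q).2
  have hpNu : (↑(e.symm q) : V) ∈ G.neighborSet u := by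
    apply hsub
    refine ⟨Or.inl hpx, ?_⟩
    simp [hpx.ne', hpy.ne]
  rw [← hrange] at hpNu
  obtain ⟨m, hm⟩ := hpNu
  have hmx : G.Adj (w m) x := by rw [hm]; exact hpx.symm
  have hmy : G.Adj (w m) y := by rw [hm]; exact hpy
  clear hq hpy hpx hm hzy' hzy hxz hyNx hzNx
  -- Step 2: locate the edge `x-y` on the induced path of `N(w m)`.
  obtain ⟨n', ⟨e'⟩⟩ := hG (w m)
  have hxN : x ∈ G.neighborSet (w m) := hmx
  have hyN : y ∈ G.neighborSet (w m) := hmy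
  have humN : G.Adj u (w m) := by
    have : w m ∈ G.neighborSet u := hrange ▸ Set.mem_range_self m
    exact this
  have huN : u ∈ G.neighborSet (w m) := humN.symm
  have hpadj : (SimpleGraph.pathGraph (n'+1)).Adj (e' ⟨x, hxN⟩) (e' ⟨y, hyN⟩) := by
    rw [e'.map_adj_iff]
    simpa [SimpleGraph.comap_adj] using hxy
  have h3 : 3 ≤ n' + 1 := by
    have h1 : e' ⟨x, hxN⟩ ≠ e' ⟨y, hyN⟩ := hpadj.ne
    have h2 : e' ⟨x, hxN⟩ ≠ e' ⟨u, huN⟩ := fun h =>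
      hxne (congrArg Subtype.val (e'.toEquiv.injective h))
    have h2' : e' ⟨y, hyN⟩ ≠ e' ⟨u, huN⟩ := fun h =>
      hyne (congrArg Subtype.val (e'.toEquiv.injective h))
    have l1 := (e' ⟨x, hxN⟩).isLt
    have l2 := (e' ⟨y, hyN⟩).isLt
    have l3 := (e' ⟨u, huN⟩).isLt
    have v1 : ((e' ⟨x, hxN⟩ : Fin (n'+1)) : ℕ) ≠ (e' ⟨y, hyN⟩ : Fin (n'+1)) :=
      fun h => h1 (Fin.ext h)
    have v2 : ((e' ⟨x, hxN⟩ : Fin (n'+1)) : ℕ) ≠ (e' ⟨u, huN⟩ : Fin (n'+1)) :=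
      fun h => h2 (Fin.ext h)
    have v3 : ((e' ⟨y, hyN⟩ : Fin (n'+1)) : ℕ) ≠ (e' ⟨u, huN⟩ : Fin (n'+1)) :=
      fun h => h2' (Fin.ext h)
    omega
  rw [SimpleGraph.pathGraph_adj] at hpadj
  obtain ⟨qv, hqlt, hqa, hqb, hcase⟩ :=
    find_q (n'+1) (e' ⟨x, hxN⟩) (e' ⟨y, hyN⟩) h3 (e' ⟨x, hxN⟩).isLt (e' ⟨y, hyN⟩).isLt hpadj
  set qf : Fin (n'+1) := ⟨qv, hqlt⟩ with hqf
  have hvN : (↑(e'.symm qf) : V) ∈ G.neighborSet (w m) := (e'.symm qf).2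
  have hvwm : G.Adj (w m) ↑(e'.symm qf) := hvN
  have hvx_ne : (↑(e'.symm qf) : V) ≠ x := by
    intro h
    apply hqa
    have h1 : e'.symm qf = ⟨x, hxN⟩ := Subtype.ext h
    have h2 : qf = e' ⟨x, hxN⟩ := by rw [← h1, e'.apply_symm_apply]
    exact congrArg Fin.val h2
  have hvy_ne : (↑(e'.symm qf) : V) ≠ y := by
    intro h
    apply hqb
    have h1 : e'.symm qf = ⟨y, hyN⟩ := Subtype.ext h
    have h2 : qf = e' ⟨y, hyN⟩ := by rw [← h1, e'.apply_symm_apply]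
    exact congrArg Fin.val h2
  have hax : (SimpleGraph.pathGraph (n'+1)).Adj qf (e' ⟨x, hxN⟩) ↔
      G.Adj (↑(e'.symm qf)) x := induce_adj_iff e' qf x hxN
  have hay : (SimpleGraph.pathGraph (n'+1)).Adj qf (e' ⟨y, hyN⟩) ↔
      G.Adj (↑(e'.symm qf)) y := induce_adj_iff e' qf y hyN
  rw [SimpleGraph.pathGraph_adj] at hax hay
  -- the common structure of both cases
  have main : ∀ v : V, G.Adj (w m) v → v ≠ x → v ≠ y →
      ((G.Adj v x ∧ ¬ G.Adj v y) ∨ (G.Adj v y ∧ ¬ G.Adj v x)) →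
      ∃ i j : Fin t, (i : ℕ) + 1 = j ∧
        Nonempty ((G.induce {w i, w j, x, y}) ≃g diamondGraph) := by
    intro v hwmv hvx hvy hvcase
    have hvNu : v ∈ G.neighborSet u := by
      apply hsub
      rcases hvcase with ⟨h1, _⟩ | ⟨h1, _⟩
      · exact ⟨Or.inl h1.symm, by simp [hvx, hvy]⟩
      · exact ⟨Or.inr h1.symm, by simp [hvx, hvy]⟩
    rw [← hrange] at hvNu
    obtain ⟨k, hk⟩ := hvNu
    have hkm : G.Adj (w k) (w m) := by rw [hk]; exact hwmv.symm
    have hkm_ne : w k ≠ w m := hkm.ne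
    have hkm' := (hpath k m).mp hkm
    subst hk
    rcases hvcase with ⟨hvx', hvy'⟩ | ⟨hvy', hvx'⟩
    · -- w k adjacent to x, not to y : missing pair (w k, y)
      have nwky : ¬ G.Adj (w k) y := hvy'
      have key : Nonempty ((G.induce {w k, y, w m, x}) ≃g diamondGraph) :=
        diamond_helper G (w k) y (w m) x (hwy k) hkm_ne (hwx k)
          (fun h => (hwy m) h.symm) hxy.ne' (hwx m)
          nwky hkm hvx' hmy.symm hxy.symm hmx
      rcases hkm' with hc | hc
      · refine ⟨k, m, hc, ?_⟩
        rw [set_perm1 (w k) (w m) x y]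
        exact key
      · refine ⟨m, k, hc, ?_⟩
        rw [set_perm2 (w m) (w k) x y]
        exact key
    · -- w k adjacent to y, not to x : missing pair (w k, x)
      have nwkx : ¬ G.Adj (w k) x := hvx'
      have key : Nonempty ((G.induce {w k, x, w m, y}) ≃g diamondGraph) :=
        diamond_helper G (w k) x (w m) y (hwx k) hkm_ne (hwy k)
          (fun h => (hwx m) h.symm) hxy.ne (hwy m)
          nwkx hkm hvy' hmx.symm hxy hmy
      rcases hkm' with hc | hc
      · refine ⟨k, m, hc, ?_⟩
        rw [set_perm3 (w k) (w m) x y]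
        exact key
      · refine ⟨m, k, hc, ?_⟩
        rw [set_perm4 (w m) (w k) x y]
        exact key
  rcases hcase with ⟨h1, h2⟩ | ⟨h1, h2⟩
  · exact main _ hvwm hvx_ne hvy_ne (Or.inl ⟨hax.mp h1, fun h => h2 (hay.mpr h)⟩)
  · exact main _ hvwm hvx_ne hvy_ne (Or.inr ⟨hay.mp h1, fun h => h2 (hax.mpr h)⟩)
end

section
/- There exists a nonhamiltonian locally linear graph on exactly 12 vertices. -/
namespace NH12

def edgeL : List (Fin 12 × Fin 12) :=
  [(0,1),(0,3),(0,4),(0,6),(0,8),(1,2),(1,4),(2,3),(2,4),(2,10),(3,8),(3,10),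
   (4,5),(4,6),(4,10),(4,11),(5,6),(6,7),(6,8),(7,8),(8,9),(8,10),(9,10),(10,11)]

def G12 : SimpleGraph (Fin 12) where
  Adj a b := (a, b) ∈ edgeL ∨ (b, a) ∈ edgeL
  symm := ⟨fun a b h => h.symm⟩
  loopless := ⟨fun a h =>
    (by decide : ∀ a : Fin 12, ¬((a, a) ∈ edgeL ∨ (a, a) ∈ edgeL)) a h⟩

instance : DecidableRel G12.Adj :=
  fun a b => inferInstanceAs (Decidable ((a, b) ∈ edgeL ∨ (b, a) ∈ edgeL))

lemma iso_helper (G : SimpleGraph (Fin 12)) (v : Fin 12) (n : ℕ)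
    (vec : Fin (n+1) → Fin 12) (idx : Fin 12 → Fin (n+1))
    (h1 : ∀ i, G.Adj v (vec i))
    (h2 : ∀ x, G.Adj v x → vec (idx x) = x)
    (h3 : ∀ i, idx (vec i) = i)
    (h4 : ∀ x y, G.Adj v x → G.Adj v y →
      ((SimpleGraph.pathGraph (n+1)).Adj (idx x) (idx y) ↔ G.Adj x y)) :
    Nonempty ((G.induce (G.neighborSet v)) ≃g SimpleGraph.pathGraph (n + 1)) := by
  refine ⟨⟨⟨fun x => idx x.1, fun i => ⟨vec i, h1 i⟩, ?_, ?_⟩, ?_⟩⟩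
  · intro x
    exact Subtype.ext (h2 x.1 x.2)
  · intro i
    exact h3 i
  · intro a b
    exact h4 a.1 b.1 a.2 b.2

lemma locallyPath : LocallyPath G12 := by
  intro v
  fin_cases v
  · exact ⟨4, iso_helper G12 0 4 ![1,4,6,8,3] ![0,0,0,4,1,0,2,0,3,0,0,0]
      (by decide) (by decide) (by decide)
      (by simp only [SimpleGraph.pathGraph_adj]; decide)⟩
  · exact ⟨2, iso_helper G12 1 2 ![0,4,2] ![0,0,2,0,1,0,0,0,0,0,0,0]
      (by decide) (by decide) (by decide)
      (by simp only [SimpleGraph.pathGraph_adj]; decide)⟩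
  · exact ⟨3, iso_helper G12 2 3 ![1,4,10,3] ![0,0,0,3,1,0,0,0,0,0,2,0]
      (by decide) (by decide) (by decide)
      (by simp only [SimpleGraph.pathGraph_adj]; decide)⟩
  · exact ⟨3, iso_helper G12 3 3 ![0,8,10,2] ![0,0,3,0,0,0,0,0,1,0,2,0]
      (by decide) (by decide) (by decide)
      (by simp only [SimpleGraph.pathGraph_adj]; decide)⟩
  · exact ⟨6, iso_helper G12 4 6 ![5,6,0,1,2,10,11] ![2,3,4,0,0,0,1,0,0,0,5,6]
      (by decide) (by decide) (by decide)
      (by simp only [SimpleGraph.pathGraph_adj]; decide)⟩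
  · exact ⟨1, iso_helper G12 5 1 ![4,6] ![0,0,0,0,0,0,1,0,0,0,0,0]
      (by decide) (by decide) (by decide)
      (by simp only [SimpleGraph.pathGraph_adj]; decide)⟩
  · exact ⟨4, iso_helper G12 6 4 ![5,4,0,8,7] ![2,0,0,0,1,0,0,4,3,0,0,0]
      (by decide) (by decide) (by decide)
      (by simp only [SimpleGraph.pathGraph_adj]; decide)⟩
  · exact ⟨1, iso_helper G12 7 1 ![6,8] ![0,0,0,0,0,0,0,0,1,0,0,0]
      (by decide) (by decide) (by decide)
      (by simp only [SimpleGraph.pathGraph_adj]; decide)⟩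
  · exact ⟨5, iso_helper G12 8 5 ![7,6,0,3,10,9] ![2,0,0,3,0,0,1,0,0,5,4,0]
      (by decide) (by decide) (by decide)
      (by simp only [SimpleGraph.pathGraph_adj]; decide)⟩
  · exact ⟨1, iso_helper G12 9 1 ![8,10] ![0,0,0,0,0,0,0,0,0,0,1,0]
      (by decide) (by decide) (by decide)
      (by simp only [SimpleGraph.pathGraph_adj]; decide)⟩
  · exact ⟨5, iso_helper G12 10 5 ![11,4,2,3,8,9] ![0,0,2,3,1,0,0,0,4,5,0,0]
      (by decide) (by decide) (by decide)
      (by simp only [SimpleGraph.pathGraph_adj]; decide)⟩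
  · exact ⟨1, iso_helper G12 11 1 ![4,10] ![0,0,0,0,0,0,0,0,0,0,1,0]
      (by decide) (by decide) (by decide)
      (by simp only [SimpleGraph.pathGraph_adj]; decide)⟩

lemma connected : G12.Connected := by
  rw [SimpleGraph.connected_iff]
  have r : ∀ v : Fin 12, G12.Reachable 0 v := by
    intro v
    have h1 : G12.Reachable 0 1 := (by decide : G12.Adj 0 1).reachable
    have h3 : G12.Reachable 0 3 := (by decide : G12.Adj 0 3).reachable
    have h4 : G12.Reachable 0 4 := (by decide : G12.Adj 0 4).reachable
    have h6 : G12.Reachable 0 6 := (by decide : G12.Adj 0 6).reachable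
    have h8 : G12.Reachable 0 8 := (by decide : G12.Adj 0 8).reachable
    have h2 : G12.Reachable 0 2 := h1.trans (by decide : G12.Adj 1 2).reachable
    have h5 : G12.Reachable 0 5 := h4.trans (by decide : G12.Adj 4 5).reachable
    have h7 : G12.Reachable 0 7 := h6.trans (by decide : G12.Adj 6 7).reachable
    have h9 : G12.Reachable 0 9 := h8.trans (by decide : G12.Adj 8 9).reachable
    have h10 : G12.Reachable 0 10 := h2.trans (by decide : G12.Adj 2 10).reachable
    have h11 : G12.Reachable 0 11 := h4.trans (by decide : G12.Adj 4 11).reachable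
    fin_cases v <;> first | rfl | assumption
  exact ⟨fun u v => (r u).symm.trans (r v), ⟨0⟩⟩

/-- getVert is injective on `[0, length]` for a walk with nodup support. -/
lemma getVert_injOn_of_nodup {V : Type*} {G : SimpleGraph V} :
    ∀ {u w : V} (p : G.Walk u w), p.support.Nodup →
      ∀ i, i ≤ p.length → ∀ j, j ≤ p.length → p.getVert i = p.getVert j → i = j := by
  intro u w p
  induction p with
  | nil =>
    intro _ i hi j hj _
    simp only [SimpleGraph.Walk.length_nil, Nat.le_zero] at hi hj
    omega
  | @cons a b c hadj q ih =>
    intro hnd i hi j hj heq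
    rw [SimpleGraph.Walk.support_cons, List.nodup_cons] at hnd
    rw [SimpleGraph.Walk.length_cons] at hi hj
    match i, j with
    | 0, 0 => rfl
    | 0, (j+1) =>
      exfalso
      apply hnd.1
      rw [SimpleGraph.Walk.mem_support_iff_exists_getVert]
      refine ⟨j, ?_, by omega⟩
      have : (SimpleGraph.Walk.cons hadj q).getVert (j+1) = q.getVert j := rfl
      rw [← this, ← heq]
      rfl
    | (i+1), 0 =>
      exfalso
      apply hnd.1
      rw [SimpleGraph.Walk.mem_support_iff_exists_getVert]
      refine ⟨i, ?_, by omega⟩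
      have : (SimpleGraph.Walk.cons hadj q).getVert (i+1) = q.getVert i := rfl
      rw [← this, heq]
      rfl
    | (i+1), (j+1) =>
      have h' : q.getVert i = q.getVert j := heq
      have := ih hnd.2 i (by omega) j (by omega) h'
      omega

lemma cycle_getVert_injOn {V : Type*} {G : SimpleGraph V} {a : V} (p : G.Walk a a)
    (h : p.support.tail.Nodup) :
    ∀ i, 0 < i → i ≤ p.length → ∀ j, 0 < j → j ≤ p.length → p.getVert i = p.getVert j → i = j := by
  cases p with
  | nil => intro i hi hi' j _ _ _; simp at hi'; omega
  | cons hadj q =>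
    intro i hi hi' j hj hj' heq
    rw [SimpleGraph.Walk.support_cons, List.tail_cons] at h
    rw [SimpleGraph.Walk.length_cons] at hi' hj'
    obtain ⟨i, rfl⟩ : ∃ i', i = i' + 1 := ⟨i - 1, by omega⟩
    obtain ⟨j, rfl⟩ : ∃ j', j = j' + 1 := ⟨j - 1, by omega⟩
    have h' : q.getVert i = q.getVert j := heq
    have := getVert_injOn_of_nodup q h i (by omega) j (by omega) h'
    omega

lemma nonhamiltonian : ¬ G12.IsHamiltonian := by
  intro h
  obtain ⟨a, p, hp⟩ := h (by simp)
  have hlen : p.length = 12 := by simpa using hp.length_eq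
  set g : ℕ → Fin 12 := p.getVert with hg
  have hg12 : g 12 = g 0 := by
    have h1 : p.getVert 12 = a := p.getVert_of_length_le (le_of_eq hlen)
    rw [hg, h1, SimpleGraph.Walk.getVert_zero]
  have hadj : ∀ i, i < 12 → G12.Adj (g i) (g (i+1)) := by
    intro i hi
    exact p.adj_getVert_succ (by omega)
  have hinj : ∀ i, 0 < i → i ≤ 12 → ∀ j, 0 < j → j ≤ 12 → g i = g j → i = j := by
    have := cycle_getVert_injOn p hp.isCycle.support_nodup
    rw [hlen] at this
    exact fun i h1 h2 j h3 h4 h5 => this i h1 h2 j h3 h4 h5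
  have hsurj : ∀ v : Fin 12, ∃ i, i < 12 ∧ g i = v := by
    intro v
    have hv := hp.mem_support v
    rw [SimpleGraph.Walk.mem_support_iff_exists_getVert] at hv
    obtain ⟨n, hn, hle⟩ := hv
    rw [hlen] at hle
    rcases Nat.lt_or_ge n 12 with h' | h'
    · exact ⟨n, h', hn⟩
    · have : n = 12 := by omega
      subst this
      exact ⟨0, by omega, by rw [← hg12]; exact hn⟩
  -- the cycle-edge relation
  set Cyc : Fin 12 → Fin 12 → Prop :=
    fun v w => ∃ i, i < 12 ∧ ((g i = v ∧ g (i+1) = w) ∨ (g i = w ∧ g (i+1) = v)) with hCyc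
  have cyc_symm : ∀ v w, Cyc v w → Cyc w v := by
    rintro v w ⟨i, hi, h | h⟩
    · exact ⟨i, hi, Or.inr h⟩
    · exact ⟨i, hi, Or.inl h⟩
  have cyc_adj : ∀ v w, Cyc v w → G12.Adj v w := by
    rintro v w ⟨i, hi, ⟨h1, h2⟩ | ⟨h1, h2⟩⟩
    · rw [← h1, ← h2]; exact hadj i hi
    · rw [← h1, ← h2]; exact (hadj i hi).symm
  -- every vertex has exactly two cycle-neighbours
  have two_nbrs : ∀ v : Fin 12, ∃ x y, x ≠ y ∧ Cyc v x ∧ Cyc v y ∧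
      (∀ z, Cyc v z → z = x ∨ z = y) := by
    intro v
    obtain ⟨i, hi, hgi⟩ := hsurj v
    rcases Nat.eq_zero_or_pos i with h0 | h0
    · subst h0
      refine ⟨g 1, g 11, ?_, ⟨0, by omega, Or.inl ⟨hgi, rfl⟩⟩,
        ⟨11, by omega, Or.inr ⟨rfl, by rw [hg12]; exact hgi⟩⟩, ?_⟩
      · intro hcon
        have := hinj 1 (by omega) (by omega) 11 (by omega) (by omega) hcon
        omega
      · rintro z ⟨j, hj, ⟨h1, h2⟩ | ⟨h1, h2⟩⟩
        · rcases Nat.eq_zero_or_pos j with hj0 | hj0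
          · subst hj0; left; exact h2.symm
          · exfalso
            have : g j = g 12 := by rw [hg12, hgi, h1]
            have := hinj j hj0 (by omega) 12 (by omega) (by omega) this
            omega
        · have : g (j+1) = g 12 := by rw [hg12, hgi, h2]
          have := hinj (j+1) (by omega) (by omega) 12 (by omega) (by omega) this
          right
          rw [← h1]
          congr 1
          omega
    · obtain ⟨k, rfl⟩ : ∃ k, i = k + 1 := ⟨i - 1, by omega⟩
      refine ⟨g (k+2), g k, ?_, ⟨k+1, hi, Or.inl ⟨hgi, rfl⟩⟩,
        ⟨k, by omega, Or.inr ⟨rfl, hgi⟩⟩, ?_⟩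
      · intro hcon
        rcases Nat.eq_zero_or_pos k with hk0 | hk0
        · subst hk0
          have : g 2 = g 12 := by rw [hg12]; exact hcon
          have := hinj 2 (by omega) (by omega) 12 (by omega) (by omega) this
          omega
        · have := hinj (k+2) (by omega) (by omega) k (by omega) (by omega) hcon
          omega
      · rintro z ⟨j, hj, ⟨h1, h2⟩ | ⟨h1, h2⟩⟩
        · rcases Nat.eq_zero_or_pos j with hj0 | hj0
          · subst hj0
            exfalso
            have : g 12 = g (k+1) := by rw [hg12, hgi, ← h1]
            have := hinj 12 (by omega) (by omega) (k+1) (by omega) (by omega) this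
            omega
          · have : g j = g (k+1) := by rw [hgi, h1]
            have := hinj j hj0 (by omega) (k+1) (by omega) (by omega) this
            left
            rw [← h2]
            congr 1
            omega
        · have : g (j+1) = g (k+1) := by rw [hgi, h2]
          have := hinj (j+1) (by omega) (by omega) (k+1) (by omega) (by omega) this
          right
          rw [← h1]
          congr 1
          omega
  -- pinning: if v has two distinct known cycle-neighbours, there are no others
  have pin : ∀ v x y : Fin 12, x ≠ y → Cyc v x → Cyc v y →
      ∀ z, Cyc v z → z = x ∨ z = y := by
    intro v x y hxy hx hy z hz
    obtain ⟨x', y', hne, _, _, huniq⟩ := two_nbrs v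
    rcases huniq x hx with hx1 | hx1 <;> rcases huniq y hy with hy1 | hy1 <;>
        rcases huniq z hz with hz1 | hz1
    · exact absurd (hx1.trans hy1.symm) hxy
    · exact absurd (hx1.trans hy1.symm) hxy
    · exact Or.inl (hz1.trans hx1.symm)
    · exact Or.inr (hz1.trans hy1.symm)
    · exact Or.inr (hz1.trans hy1.symm)
    · exact Or.inl (hz1.trans hx1.symm)
    · exact absurd (hx1.trans hy1.symm) hxy
    · exact absurd (hx1.trans hy1.symm) hxy
  -- degree-2 vertices: both incident edges are on the cycle
  have deg2 : ∀ v x y : Fin 12, (∀ z, G12.Adj v z → z = x ∨ z = y) →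
      Cyc v x ∧ Cyc v y := by
    intro v x y hdeg
    obtain ⟨x', y', hne, hx', hy', _⟩ := two_nbrs v
    rcases hdeg x' (cyc_adj _ _ hx') with rfl | rfl <;>
      rcases hdeg y' (cyc_adj _ _ hy') with rfl | rfl
    · exact absurd rfl hne
    · exact ⟨hx', hy'⟩
    · exact ⟨hy', hx'⟩
    · exact absurd rfl hne
  have h5 := deg2 5 4 6 (by decide)
  have h7 := deg2 7 6 8 (by decide)
  have h9 := deg2 9 8 10 (by decide)
  have h11 := deg2 11 4 10 (by decide)
  have p4 : ∀ z, Cyc 4 z → z = 5 ∨ z = 11 :=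
    pin 4 5 11 (by decide) (cyc_symm _ _ h5.1) (cyc_symm _ _ h11.1)
  have p6 : ∀ z, Cyc 6 z → z = 5 ∨ z = 7 :=
    pin 6 5 7 (by decide) (cyc_symm _ _ h5.2) (cyc_symm _ _ h7.1)
  have p8 : ∀ z, Cyc 8 z → z = 7 ∨ z = 9 :=
    pin 8 7 9 (by decide) (cyc_symm _ _ h7.2) (cyc_symm _ _ h9.1)
  have p10 : ∀ z, Cyc 10 z → z = 9 ∨ z = 11 :=
    pin 10 9 11 (by decide) (cyc_symm _ _ h9.2) (cyc_symm _ _ h11.2)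
  -- hence the cycle-neighbours of 0,1,2,3 stay in {0,1,2,3}
  have q0 : ∀ z, Cyc 0 z → z = 1 ∨ z = 3 := by
    intro z hz
    have hzadj : z = 1 ∨ z = 3 ∨ z = 4 ∨ z = 6 ∨ z = 8 :=
      (by decide : ∀ x : Fin 12, G12.Adj 0 x → (x = 1 ∨ x = 3 ∨ x = 4 ∨ x = 6 ∨ x = 8)) z (cyc_adj _ _ hz)
    rcases hzadj with rfl | rfl | rfl | rfl | rfl
    · exact Or.inl rfl
    · exact Or.inr rfl
    · rcases p4 0 (cyc_symm _ _ hz) with h' | h' <;> exact absurd h' (by decide)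
    · rcases p6 0 (cyc_symm _ _ hz) with h' | h' <;> exact absurd h' (by decide)
    · rcases p8 0 (cyc_symm _ _ hz) with h' | h' <;> exact absurd h' (by decide)
  have q1 : ∀ z, Cyc 1 z → z = 0 ∨ z = 2 := by
    intro z hz
    have hzadj : z = 0 ∨ z = 2 ∨ z = 4 :=
      (by decide : ∀ x : Fin 12, G12.Adj 1 x → (x = 0 ∨ x = 2 ∨ x = 4)) z (cyc_adj _ _ hz)
    rcases hzadj with rfl | rfl | rfl
    · exact Or.inl rfl
    · exact Or.inr rfl
    · rcases p4 1 (cyc_symm _ _ hz) with h' | h' <;> exact absurd h' (by decide)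
  have q2 : ∀ z, Cyc 2 z → z = 1 ∨ z = 3 := by
    intro z hz
    have hzadj : z = 1 ∨ z = 3 ∨ z = 4 ∨ z = 10 :=
      (by decide : ∀ x : Fin 12, G12.Adj 2 x → (x = 1 ∨ x = 3 ∨ x = 4 ∨ x = 10)) z (cyc_adj _ _ hz)
    rcases hzadj with rfl | rfl | rfl | rfl
    · exact Or.inl rfl
    · exact Or.inr rfl
    · rcases p4 2 (cyc_symm _ _ hz) with h' | h' <;> exact absurd h' (by decide)
    · rcases p10 2 (cyc_symm _ _ hz) with h' | h' <;> exact absurd h' (by decide)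
  have q3 : ∀ z, Cyc 3 z → z = 0 ∨ z = 2 := by
    intro z hz
    have hzadj : z = 0 ∨ z = 2 ∨ z = 8 ∨ z = 10 :=
      (by decide : ∀ x : Fin 12, G12.Adj 3 x → (x = 0 ∨ x = 2 ∨ x = 8 ∨ x = 10)) z (cyc_adj _ _ hz)
    rcases hzadj with rfl | rfl | rfl | rfl
    · exact Or.inl rfl
    · exact Or.inr rfl
    · rcases p8 3 (cyc_symm _ _ hz) with h' | h' <;> exact absurd h' (by decide)
    · rcases p10 3 (cyc_symm _ _ hz) with h' | h' <;> exact absurd h' (by decide)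
  -- the set {0,1,2,3} is closed along the cycle
  have step : ∀ i, i < 12 →
      (g i = 0 ∨ g i = 1 ∨ g i = 2 ∨ g i = 3) →
      (g (i+1) = 0 ∨ g (i+1) = 1 ∨ g (i+1) = 2 ∨ g (i+1) = 3) := by
    intro i hi hK
    have hc : Cyc (g i) (g (i+1)) := ⟨i, hi, Or.inl ⟨rfl, rfl⟩⟩
    rcases hK with h | h | h | h <;> rw [h] at hc
    · rcases q0 _ hc with h' | h'
      · exact Or.inr (Or.inl h')
      · exact Or.inr (Or.inr (Or.inr h'))
    · rcases q1 _ hc with h' | h'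
      · exact Or.inl h'
      · exact Or.inr (Or.inr (Or.inl h'))
    · rcases q2 _ hc with h' | h'
      · exact Or.inr (Or.inl h')
      · exact Or.inr (Or.inr (Or.inr h'))
    · rcases q3 _ hc with h' | h'
      · exact Or.inl h'
      · exact Or.inr (Or.inr (Or.inl h'))
  obtain ⟨i0, hi0, hgi0⟩ := hsurj 0
  -- climb from i0 to 12
  have up : ∀ m, m ≤ 12 → i0 ≤ m → (g m = 0 ∨ g m = 1 ∨ g m = 2 ∨ g m = 3) := by
    intro m
    induction m with
    | zero =>
      intro _ h2
      have : i0 = 0 := by omega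
      subst this
      exact Or.inl hgi0
    | succ m ih =>
      intro h1 h2
      rcases Nat.lt_or_ge m i0 with h' | h'
      · have : i0 = m + 1 := by omega
        subst this
        exact Or.inl hgi0
      · exact step m (by omega) (ih (by omega) h')
  have hK0 : g 0 = 0 ∨ g 0 = 1 ∨ g 0 = 2 ∨ g 0 = 3 := by
    rw [← hg12]
    exact up 12 le_rfl (by omega)
  have all : ∀ m, m ≤ 12 → (g m = 0 ∨ g m = 1 ∨ g m = 2 ∨ g m = 3) := by
    intro m
    induction m with
    | zero => intro _; exact hK0
    | succ m ih => intro h; exact step m (by omega) (ih (by omega))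
  obtain ⟨j0, hj0, hgj0⟩ := hsurj 5
  have := all j0 (by omega)
  rw [hgj0] at this
  rcases this with h' | h' | h' | h' <;> exact absurd h' (by decide)

end NH12

/-- There exists a nonhamiltonian locally linear graph on exactly `12` vertices. -/
theorem stmt_8 :
    ∃ G : SimpleGraph (Fin 12), G.Connected ∧ LocallyPath G ∧ ¬ G.IsHamiltonian := by
  exact ⟨NH12.G12, NH12.connected, NH12.locallyPath, NH12.nonhamiltonian⟩
end

section
/- Let G be a locally linear graph, u a vertex with G[N(u)] the induced path v_1 ... v_t, and suppose x, y, z are three pairwise nonadjacent vertices outside N[u], each with all neighbors contained in N(u) and with degree at least 2. Then G has a Hamilton cycle on N[u] ∪ {x,y,z} if V(G) = N[u] ∪ {x,y,z}; in particular, if V(G)−N[u] = {x,y,z} induces an independent set, G is hamiltonian. -/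
section Auxiliary

open SimpleGraph

variable {V : Type*} {G : SimpleGraph V}


variable {V : Type*} {G : SimpleGraph V}

/-- Build a walk from a chain of adjacencies. -/
lemma walk_of_chain : ∀ (l : List V) (a b : V), l.Chain' G.Adj →
    l.head? = some a → l.getLast? = some b → ∃ w : G.Walk a b, w.support = l := by
  intro l
  induction l with
  | nil => intro a b _ h; simp at h
  | cons c t ih =>
    intro a b hc hh hl
    simp only [List.head?_cons, Option.some.injEq] at hh
    subst hh
    cases t with
    | nil =>
      simp only [List.getLast?_singleton, Option.some.injEq] at hl
      subst hl
      exact ⟨SimpleGraph.Walk.nil, rfl⟩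
    | cons d t' =>
      rw [List.getLast?_cons_cons] at hl
      unfold List.Chain' at hc
      rw [List.isChain_cons_cons] at hc
      obtain ⟨w', hw'⟩ := ih d b hc.2 rfl hl
      exact ⟨SimpleGraph.Walk.cons hc.1 w', by simp [hw']⟩

lemma closing_edge_not_mem {a b : V} (w : G.Walk a b) (hp : w.IsPath)
    (hl : 2 ≤ w.length) : s(b, a) ∉ w.edges := by
  intro he
  cases w with
  | nil => simp at hl
  | @cons _ c _ h' w' =>
    rw [SimpleGraph.Walk.edges_cons, List.mem_cons] at he
    rcases he with heq | hmem
    · rw [Sym2.eq_iff] at heq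
      rcases heq with ⟨hba, hac⟩ | ⟨hbc, -⟩
      · subst hba
        have : b ∈ w'.support := w'.end_mem_support
        have hnd := hp.support_nodup
        simp only [SimpleGraph.Walk.support_cons, List.nodup_cons] at hnd
        exact hnd.1 this
      · subst hbc
        have hp' : w'.IsPath := (SimpleGraph.Walk.cons_isPath_iff _ _).mp hp |>.1
        rw [SimpleGraph.Walk.isPath_iff_eq_nil] at hp'
        subst hp'
        simp [SimpleGraph.Walk.length_cons] at hl
    · have : a ∈ w'.support := w'.snd_mem_support_of_mem_edges hmem
      have hnd := hp.support_nodup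
      simp only [SimpleGraph.Walk.support_cons, List.nodup_cons] at hnd
      exact hnd.1 this

lemma hamiltonian_of_list [Fintype V] [DecidableEq V] (l : List V) (a b : V)
    (hlen : 3 ≤ l.length) (hc : l.Chain' G.Adj) (hnd : l.Nodup)
    (hall : ∀ w : V, w ∈ l) (hh : l.head? = some a) (hl : l.getLast? = some b)
    (hadj : G.Adj b a) : G.IsHamiltonian := by
  obtain ⟨w, hw⟩ := walk_of_chain l a b hc hh hl
  have hpath : w.IsPath := SimpleGraph.Walk.IsPath.mk' (hw ▸ hnd)
  have hwlen : 2 ≤ w.length := by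
    have h1 := w.length_support
    rw [hw] at h1
    omega
  have hne : s(b, a) ∉ w.edges := closing_edge_not_mem w hpath hwlen
  have hcyc : (SimpleGraph.Walk.cons hadj w).IsCycle :=
    (SimpleGraph.Walk.cons_isCycle_iff w hadj).mpr ⟨hpath, hne⟩
  have hham : (SimpleGraph.Walk.cons hadj w).IsHamiltonianCycle := by
    rw [SimpleGraph.Walk.isHamiltonianCycle_iff_isCycle_and_support_count_tail_eq_one]
    refine ⟨hcyc, fun c => ?_⟩
    rw [SimpleGraph.Walk.support_cons, List.tail_cons, hw]
    exact List.count_eq_one_of_mem hnd (hall c)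
  exact fun _ => ⟨b, _, hham⟩


def Dlist {V : Type*} (vv : ℕ → V) (ins : ℕ → List V) : ℕ → ℕ → List V
  | 0, _ => []
  | f + 1, k => vv k :: (ins k ++ Dlist vv ins f (k + 1))

lemma key [Fintype V] [DecidableEq V] (G : SimpleGraph V)
    (u x y z : V) (n : ℕ) (vv : ℕ → V)
    (hvmem : ∀ k ≤ n, vv k ∈ G.neighborSet u)
    (hvinj : ∀ k ≤ n, ∀ k' ≤ n, vv k = vv k' → k = k')
    (hvadj : ∀ k < n, G.Adj (vv k) (vv (k + 1)))
    (hvsurj : ∀ w ∈ G.neighborSet u, ∃ k, k ≤ n ∧ vv k = w)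
    (kx ky kz : ℕ) (hkx : kx < n) (hky : ky < n) (hkz : kz < n)
    (hkxy : kx ≠ ky) (hkxz : kx ≠ kz) (hkyz : ky ≠ kz)
    (hax1 : G.Adj x (vv kx)) (hax2 : G.Adj x (vv (kx + 1)))
    (hay1 : G.Adj y (vv ky)) (hay2 : G.Adj y (vv (ky + 1)))
    (haz1 : G.Adj z (vv kz)) (haz2 : G.Adj z (vv (kz + 1)))
    (hxu : x ≠ u) (hyu : y ≠ u) (hzu : z ≠ u)
    (hxy : x ≠ y) (hxz : x ≠ z) (hyz : y ≠ z)
    (hxNu : x ∉ G.neighborSet u) (hyNu : y ∉ G.neighborSet u)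
    (hzNu : z ∉ G.neighborSet u)
    (hUniv : ∀ w : V, w = u ∨ w ∈ G.neighborSet u ∨ w = x ∨ w = y ∨ w = z) :
    G.IsHamiltonian := by
  classical
  set ins : ℕ → List V := fun k =>
    if k = kx then [x] else if k = ky then [y] else if k = kz then [z] else [] with hins_def
  -- basic facts about ins
  have hins_mem : ∀ k w, w ∈ ins k →
      (k = kx ∧ w = x) ∨ (k = ky ∧ w = y) ∨ (k = kz ∧ w = z) := by
    intro k w hw
    simp only [hins_def] at hw
    split_ifs at hw with h1 h2 h3 <;> simp_all
  have hins_n : ins n = [] := by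
    simp only [hins_def]
    rw [if_neg (by omega), if_neg (by omega), if_neg (by omega)]
  have hins_adj : ∀ k w, w ∈ ins k → G.Adj (vv k) w ∧ G.Adj w (vv (k + 1)) := by
    intro k w hw
    rcases hins_mem k w hw with ⟨rfl, rfl⟩ | ⟨rfl, rfl⟩ | ⟨rfl, rfl⟩
    · exact ⟨hax1.symm, hax2⟩
    · exact ⟨hay1.symm, hay2⟩
    · exact ⟨haz1.symm, haz2⟩
  have hins_lt : ∀ k, ins k ≠ [] → k < n := by
    intro k hk
    simp only [hins_def] at hk
    split_ifs at hk with h1 h2 h3 <;> first | omega | exact absurd rfl hk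
  -- the chain property
  have hchain : ∀ f k, k + f = n + 1 → List.Chain' G.Adj (Dlist vv ins f k) := by
    intro f
    induction f with
    | zero => intro k _; exact List.isChain_nil
    | succ f ih =>
      intro k hk
      show List.Chain' G.Adj (vv k :: (ins k ++ Dlist vv ins f (k + 1)))
      have hcases : ins k = [] ∨ ∃ w0, ins k = [w0] := by
        simp only [hins_def]; split_ifs <;> simp
      rcases hcases with hnil | ⟨w0, hcons⟩
      · unfold List.Chain'
        rw [hnil, List.nil_append, List.isChain_cons]
        refine ⟨?_, ih (k+1) (by omega)⟩
        intro c hc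
        match f, hc with
        | f + 1, hc =>
          have h0 : vv (k+1) = c := by simpa [Dlist] using hc
          exact h0 ▸ hvadj k (by omega)
      · rw [hcons]
        have hkltn : k < n := hins_lt k (by rw [hcons]; simp)
        have ⟨ha1, ha2⟩ := hins_adj k w0 (by rw [hcons]; simp)
        have hf1 : 1 ≤ f := by omega
        unfold List.Chain'
        rw [List.singleton_append, List.isChain_cons_cons, List.isChain_cons]
        refine ⟨ha1, ?_, ih (k+1) (by omega)⟩
        intro c hc
        match f, hc with
        | f + 1, hc =>
          have h0 : vv (k+1) = c := by simpa [Dlist] using hc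
          exact h0 ▸ ha2
  -- flatMap representation
  have hDeq : ∀ f k, Dlist vv ins f k = (List.range' k f).flatMap (fun j => vv j :: ins j) := by
    intro f
    induction f with
    | zero => intro k; rfl
    | succ f ih =>
      intro k
      rw [List.range'_succ]
      simp [Dlist, ih (k+1)]
  set M := Dlist vv ins (n+1) 0 with hM_def
  have hMeq : M = (List.range' 0 (n+1)).flatMap (fun j => vv j :: ins j) := hDeq (n+1) 0
  -- membership characterizations
  have hmemM : ∀ w, w ∈ M ↔ ∃ j, j ≤ n ∧ (w = vv j ∨ w ∈ ins j) := by
    intro w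
    rw [hMeq, List.mem_flatMap]
    constructor
    · rintro ⟨j, hj, hw⟩
      rw [List.mem_range'_1] at hj
      rw [List.mem_cons] at hw
      exact ⟨j, by omega, hw⟩
    · rintro ⟨j, hj, hw⟩
      exact ⟨j, List.mem_range'_1.mpr (by omega), List.mem_cons.mpr hw⟩
  have hx_mem : x ∈ M := by
    refine (hmemM x).mpr ⟨kx, by omega, Or.inr ?_⟩
    simp [hins_def]
  have hy_mem : y ∈ M := by
    refine (hmemM y).mpr ⟨ky, by omega, Or.inr ?_⟩
    simp [hins_def, Ne.symm hkxy]
  have hz_mem : z ∈ M := by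
    refine (hmemM z).mpr ⟨kz, by omega, Or.inr ?_⟩
    simp [hins_def, Ne.symm hkxz, Ne.symm hkyz]
  -- u not in M
  have hins_not_Nu : ∀ j w, w ∈ ins j → w ∉ G.neighborSet u ∧ w ≠ u ∧ (w = x ∨ w = y ∨ w = z) := by
    intro j w hw
    rcases hins_mem j w hw with ⟨_, rfl⟩ | ⟨_, rfl⟩ | ⟨_, rfl⟩
    · exact ⟨hxNu, hxu, Or.inl rfl⟩
    · exact ⟨hyNu, hyu, Or.inr (Or.inl rfl)⟩
    · exact ⟨hzNu, hzu, Or.inr (Or.inr rfl)⟩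
  have hu_not : u ∉ M := by
    intro hu
    rcases (hmemM u).mp hu with ⟨j, hj, rfl | hw⟩
    · have := hvmem j hj
      rw [SimpleGraph.mem_neighborSet] at this
      exact G.irrefl this
    · exact (hins_not_Nu j u hw).2.1 rfl
  -- nodup
  have hnodupM : M.Nodup := by
    rw [hMeq, List.nodup_flatMap]
    constructor
    · intro j hj
      rw [List.mem_range'_1] at hj
      refine List.nodup_cons.mpr ⟨?_, ?_⟩
      · intro hvj
        exact (hins_not_Nu j _ hvj).1 (hvmem j (by omega))
      · simp only [hins_def]
        split_ifs <;> simp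
    · have hPlt := List.pairwise_lt_range' (s := 0) (n := n+1)
      rw [List.Pairwise.and_mem] at hPlt
      refine hPlt.imp fun {j j'} h => ?_
      · obtain ⟨hj, hj', hlt⟩ := h
        rw [List.mem_range'_1] at hj hj'
        intro w hw hw'
        rw [List.mem_cons] at hw hw'
        have hjn : j ≤ n := by omega
        have hj'n : j' ≤ n := by omega
        rcases hw with rfl | hw
        · rcases hw' with heq | hw'
          · exact absurd (hvinj j hjn j' hj'n heq) (by omega)
          · exact (hins_not_Nu j' _ hw').1 (hvmem j hjn)
        · rcases hw' with heq | hw'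
          · exact (hins_not_Nu j _ hw).1 (heq ▸ hvmem j' hj'n)
          · rcases hins_mem j _ hw with ⟨rfl, rfl⟩ | ⟨rfl, rfl⟩ | ⟨rfl, rfl⟩ <;>
              rcases hins_mem j' _ hw' with ⟨rfl, h'⟩ | ⟨rfl, h'⟩ | ⟨rfl, h'⟩ <;>
              first
                | omega
                | (exact hxy h'.symm)
                | (exact hxz h'.symm)
                | (exact hyz h'.symm)
                | (exact hxy h')
                | (exact hxz h')
                | (exact hyz h')
  have hnodupL : (u :: M).Nodup := List.nodup_cons.mpr ⟨hu_not, hnodupM⟩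
  -- all vertices
  have hallL : ∀ w : V, w ∈ u :: M := by
    intro w
    rcases hUniv w with rfl | hw | rfl | rfl | rfl
    · exact List.mem_cons_self
    · obtain ⟨k, hk, rfl⟩ := hvsurj w hw
      exact List.mem_cons_of_mem _ ((hmemM _).mpr ⟨k, hk, Or.inl rfl⟩)
    · exact List.mem_cons_of_mem _ hx_mem
    · exact List.mem_cons_of_mem _ hy_mem
    · exact List.mem_cons_of_mem _ hz_mem
  -- chain for full list
  have hchainL : (u :: M).Chain' G.Adj := by
    unfold List.Chain'
    rw [List.isChain_cons]
    refine ⟨?_, hchain (n+1) 0 (by omega)⟩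
    intro c hc
    have h0 : vv 0 = c := by
      have : M.head? = some (vv 0) := rfl
      rw [this] at hc
      exact (Option.mem_some_iff.mp hc)
    have := hvmem 0 (by omega)
    rw [SimpleGraph.mem_neighborSet] at this
    exact h0 ▸ this
  -- getLast
  have hlast : (u :: M).getLast? = some (vv n) := by
    have hMlast : M.getLast? = some (vv n) := by
      have : ∀ f k, 1 ≤ f → k + f = n + 1 → (Dlist vv ins f k).getLast? = some (vv n) := by
        intro f
        induction f with
        | zero => omega
        | succ f ih =>
          intro k _ hkf
          match f, ih with
          | 0, _ =>
            have hkn : k = n := by omega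
            subst hkn
            show ((vv k :: (ins k ++ Dlist vv ins 0 (k+1))).getLast? = some (vv k))
            rw [hins_n]
            rfl
          | f + 1, ih =>
            have h2 := ih (k+1) (by omega) (by omega)
            show ((vv k :: ins k) ++ Dlist vv ins (f+1) (k+1)).getLast? = some (vv n)
            rw [List.getLast?_append, h2]
            rfl
      exact this (n+1) 0 (by omega) (by omega)
    obtain ⟨n', rfl⟩ : ∃ n', n = n' + 1 := ⟨n - 1, by omega⟩
    show (u :: vv 0 :: (ins 0 ++ Dlist vv ins (n'+1) 1)).getLast? = _
    rw [List.getLast?_cons_cons]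
    exact hMlast
  -- length
  have hlen : 3 ≤ (u :: M).length := by
    obtain ⟨n', hn'⟩ : ∃ n', n = n' + 1 := ⟨n - 1, by omega⟩
    have : M = vv 0 :: (ins 0 ++ (vv 1 :: (ins 1 ++ Dlist vv ins n' 2))) := by
      rw [hM_def, hn']
      rfl
    rw [this]
    simp only [List.length_cons, List.length_append]
    omega
  -- conclusion
  have hclose : G.Adj (vv n) u := by
    have := hvmem n le_rfl
    rw [SimpleGraph.mem_neighborSet] at this
    exact this.symm
  exact hamiltonian_of_list (u :: M) u (vv n) hlen hchainL hnodupL hallL rfl hlast hclose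


/-- Two adjacent neighbors exist for any vertex of degree ≥ 2 in a locally-path graph. -/
lemma exists_adj_pair [Fintype V] [DecidableRel G.Adj] (hG : LocallyPath G) (w : V)
    (hd : 2 ≤ G.degree w) : ∃ a b : V, G.Adj w a ∧ G.Adj w b ∧ G.Adj a b := by
  obtain ⟨m, ⟨ψ⟩⟩ := hG w
  have hcard : Fintype.card (G.neighborSet w) = m + 1 := by
    rw [Fintype.card_congr ψ.toEquiv, Fintype.card_fin]
  have hm : 1 ≤ m := by
    have := G.card_neighborSet_eq_degree w
    omega
  set i0 : Fin (m+1) := ⟨0, by omega⟩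
  set i1 : Fin (m+1) := ⟨1, by omega⟩
  have hadj : (SimpleGraph.pathGraph (m+1)).Adj i0 i1 := by
    rw [SimpleGraph.pathGraph_adj]
    left; rfl
  set a := ψ.symm i0
  set b := ψ.symm i1
  have hab : (G.induce (G.neighborSet w)).Adj a b := ψ.symm.map_adj_iff.mpr hadj
  have hab' : G.Adj ↑a ↑b := hab
  exact ⟨↑a, ↑b, a.2, b.2, hab'⟩

/-- No vertex pair can have three common neighbors fanning, in a locally-path graph. -/
lemma no_three_fan (hG : LocallyPath G) (w d a b c : V)
    (hd : G.Adj w d) (ha : G.Adj w a) (hb : G.Adj w b) (hc : G.Adj w c)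
    (hab : a ≠ b) (hac : a ≠ c) (hbc : b ≠ c)
    (had : G.Adj a d) (hbd : G.Adj b d) (hcd : G.Adj c d) : False := by
  obtain ⟨m, ⟨ψ⟩⟩ := hG w
  set dd := ψ ⟨d, hd⟩
  set da := ψ ⟨a, ha⟩
  set db := ψ ⟨b, hb⟩
  set dc := ψ ⟨c, hc⟩
  have hA : (SimpleGraph.pathGraph (m+1)).Adj da dd := ψ.map_adj_iff.mpr had
  have hB : (SimpleGraph.pathGraph (m+1)).Adj db dd := ψ.map_adj_iff.mpr hbd
  have hC : (SimpleGraph.pathGraph (m+1)).Adj dc dd := ψ.map_adj_iff.mpr hcd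
  rw [SimpleGraph.pathGraph_adj] at hA hB hC
  have inj : ∀ (p q : V) (hp : G.Adj w p) (hq : G.Adj w q),
      ψ ⟨p, hp⟩ = ψ ⟨q, hq⟩ → p = q := by
    intro p q hp hq h
    have := ψ.toEquiv.injective (by exact h)
    exact congrArg Subtype.val this
  have h1 : (da : ℕ) ≠ (db : ℕ) := fun h => hab (inj a b ha hb (Fin.ext h))
  have h2 : (da : ℕ) ≠ (dc : ℕ) := fun h => hac (inj a c ha hc (Fin.ext h))
  have h3 : (db : ℕ) ≠ (dc : ℕ) := fun h => hbc (inj b c hb hc (Fin.ext h))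
  omega
end Auxiliary

/-- If `x, y, z` are pairwise nonadjacent vertices outside `N[u]`, each with all
neighbors in `N(u)` and degree at least two, and `V(G) = N[u] ∪ {x, y, z}`, then
`G` is hamiltonian. -/
theorem stmt_15 {V : Type*} [Fintype V] [DecidableEq V] (G : SimpleGraph V)
    [DecidableRel G.Adj]
    (hconn : G.Connected) (hG : LocallyPath G) (u x y z : V)
    (hxy : x ≠ y) (hxz : x ≠ z) (hyz : y ≠ z)
    (haxy : ¬ G.Adj x y) (haxz : ¬ G.Adj x z) (hayz : ¬ G.Adj y z)
    (hxN : x ∉ insert u (G.neighborSet u))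
    (hyN : y ∉ insert u (G.neighborSet u))
    (hzN : z ∉ insert u (G.neighborSet u))
    (hNx : G.neighborSet x ⊆ G.neighborSet u)
    (hNy : G.neighborSet y ⊆ G.neighborSet u)
    (hNz : G.neighborSet z ⊆ G.neighborSet u)
    (hdx : 2 ≤ G.degree x) (hdy : 2 ≤ G.degree y) (hdz : 2 ≤ G.degree z)
    (huniv : (Set.univ : Set V) = insert u (G.neighborSet u) ∪ {x, y, z}) :
    G.IsHamiltonian := by
  -- unpack the non-membership hypotheses
  have hxu : x ≠ u := fun h => hxN (h ▸ Set.mem_insert _ _)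
  have hyu : y ≠ u := fun h => hyN (h ▸ Set.mem_insert _ _)
  have hzu : z ≠ u := fun h => hzN (h ▸ Set.mem_insert _ _)
  have hxNu : x ∉ G.neighborSet u := fun h => hxN (Set.mem_insert_of_mem _ h)
  have hyNu : y ∉ G.neighborSet u := fun h => hyN (Set.mem_insert_of_mem _ h)
  have hzNu : z ∉ G.neighborSet u := fun h => hzN (Set.mem_insert_of_mem _ h)
  have hUniv : ∀ w : V, w = u ∨ w ∈ G.neighborSet u ∨ w = x ∨ w = y ∨ w = z := by
    intro w
    have hw : w ∈ (Set.univ : Set V) := Set.mem_univ w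
    rw [huniv] at hw
    rcases hw with hw | hw
    · rcases hw with hw | hw
      · exact Or.inl hw
      · exact Or.inr (Or.inl hw)
    · rcases hw with hw | hw | hw
      · exact Or.inr (Or.inr (Or.inl hw))
      · exact Or.inr (Or.inr (Or.inr (Or.inl hw)))
      · exact Or.inr (Or.inr (Or.inr (Or.inr hw)))
  -- the path structure on N(u)
  obtain ⟨n, ⟨φ⟩⟩ := hG u
  set vv : ℕ → V := fun k => ↑(φ.symm ⟨k % (n+1), Nat.mod_lt _ (Nat.succ_pos n)⟩) with hvv
  have hvmem : ∀ k, k ≤ n → vv k ∈ G.neighborSet u := by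
    intro k _
    exact (φ.symm ⟨k % (n+1), Nat.mod_lt _ (Nat.succ_pos n)⟩).2
  have hvinj : ∀ k, k ≤ n → ∀ k', k' ≤ n → vv k = vv k' → k = k' := by
    intro k hk k' hk' h
    simp only [hvv] at h
    have h2 := φ.symm.toEquiv.injective (Subtype.coe_injective h)
    have h3 := congrArg Fin.val h2
    simp only at h3
    rw [Nat.mod_eq_of_lt (show k < n+1 by omega), Nat.mod_eq_of_lt (show k' < n+1 by omega)] at h3
    exact h3
  have hvadj : ∀ k, k < n → G.Adj (vv k) (vv (k+1)) := by
    intro k hk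
    have hadj : (SimpleGraph.pathGraph (n+1)).Adj ⟨k % (n+1), Nat.mod_lt _ (Nat.succ_pos n)⟩
        ⟨(k+1) % (n+1), Nat.mod_lt _ (Nat.succ_pos n)⟩ := by
      rw [SimpleGraph.pathGraph_adj]
      left
      simp only
      rw [Nat.mod_eq_of_lt (show k < n+1 by omega), Nat.mod_eq_of_lt (show k+1 < n+1 by omega)]
    exact φ.symm.map_adj_iff.mpr hadj
  have hvsurj : ∀ w ∈ G.neighborSet u, ∃ k, k ≤ n ∧ vv k = w := by
    intro w hw
    refine ⟨(φ ⟨w, hw⟩).val, by omega, ?_⟩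
    simp only [hvv]
    have : (⟨(φ ⟨w, hw⟩).val % (n+1), Nat.mod_lt _ (Nat.succ_pos n)⟩ : Fin (n+1)) = φ ⟨w, hw⟩ := by
      apply Fin.ext
      simp only
      exact Nat.mod_eq_of_lt (φ ⟨w, hw⟩).isLt
    rw [this, φ.symm_apply_apply]
  -- the insertion position of a vertex whose neighborhood lies in N(u)
  have hpos : ∀ w : V, G.neighborSet w ⊆ G.neighborSet u → 2 ≤ G.degree w →
      ∃ k, k < n ∧ G.Adj w (vv k) ∧ G.Adj w (vv (k+1)) := by
    intro w hNw hdw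
    obtain ⟨a, b, hwa, hwb, hab⟩ := exists_adj_pair hG w hdw
    have haU : a ∈ G.neighborSet u := hNw hwa
    have hbU : b ∈ G.neighborSet u := hNw hwb
    have hadj : (SimpleGraph.pathGraph (n+1)).Adj (φ ⟨a, haU⟩) (φ ⟨b, hbU⟩) :=
      φ.map_adj_iff.mpr hab
    rw [SimpleGraph.pathGraph_adj] at hadj
    have hval : ∀ (c : V) (hc : c ∈ G.neighborSet u), vv ((φ ⟨c, hc⟩).val) = c := by
      intro c hc
      simp only [hvv]
      have : (⟨(φ ⟨c, hc⟩).val % (n+1), Nat.mod_lt _ (Nat.succ_pos n)⟩ : Fin (n+1))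
          = φ ⟨c, hc⟩ := by
        apply Fin.ext
        simp only
        exact Nat.mod_eq_of_lt (φ ⟨c, hc⟩).isLt
      rw [this, φ.symm_apply_apply]
    rcases hadj with h1 | h1
    · refine ⟨(φ ⟨a, haU⟩).val, ?_, ?_, ?_⟩
      · have := (φ ⟨b, hbU⟩).isLt
        omega
      · rw [hval a haU]; exact hwa
      · rw [h1, hval b hbU]; exact hwb
    · refine ⟨(φ ⟨b, hbU⟩).val, ?_, ?_, ?_⟩
      · have := (φ ⟨a, haU⟩).isLt
        omega
      · rw [hval b hbU]; exact hwb
      · rw [h1, hval a haU]; exact hwa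
  obtain ⟨kx, hkx, hax1, hax2⟩ := hpos x hNx hdx
  obtain ⟨ky, hky, hay1, hay2⟩ := hpos y hNy hdy
  obtain ⟨kz, hkz, haz1, haz2⟩ := hpos z hNz hdz
  -- distinctness of insertion positions
  have hdistinct : ∀ p q : V, p ≠ q → p ≠ u → q ≠ u → ∀ k, k < n →
      G.Adj p (vv k) → G.Adj p (vv (k+1)) → G.Adj q (vv k) → G.Adj q (vv (k+1)) → False := by
    intro p q hpq hpu hqu k hk hp1 hp2 hq1 hq2
    have hvk := hvmem k (by omega)
    have hvk1 := hvmem (k+1) (by omega)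
    rw [SimpleGraph.mem_neighborSet] at hvk hvk1
    exact no_three_fan hG (vv k) (vv (k+1)) u p q
      (hvadj k hk) hvk.symm hp1.symm hq1.symm
      (Ne.symm hpu) (Ne.symm hqu) hpq
      hvk1 hp2 hq2
  have hkxy : kx ≠ ky := by
    intro h
    exact hdistinct x y hxy hxu hyu kx hkx hax1 hax2 (h ▸ hay1) (h ▸ hay2)
  have hkxz : kx ≠ kz := by
    intro h
    exact hdistinct x z hxz hxu hzu kx hkx hax1 hax2 (h ▸ haz1) (h ▸ haz2)
  have hkyz : ky ≠ kz := by
    intro h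
    exact hdistinct y z hyz hyu hzu ky hky hay1 hay2 (h ▸ haz1) (h ▸ haz2)
  exact key G u x y z n vv hvmem hvinj hvadj hvsurj kx ky kz hkx hky hkz
    hkxy hkxz hkyz hax1 hax2 hay1 hay2 haz1 haz2 hxu hyu hzu hxy hxz hyz
    hxNu hyNu hzNu hUniv
end

section
/- Let G be a graph obtained from two locally traceable graphs G_1 and G_2 (each of order at least 3) by identifying a suitable edge u_1v_1 of G_1 with a suitable edge u_2v_2 of G_2. Then G is locally traceable, and if G is hamiltonian then both G_1 and G_2 are hamiltonian. -/
/-- A graph is locally traceable if the neighborhood of every vertex induces a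
graph with a Hamilton path. -/
def LocallyTraceable {V : Type*} [DecidableEq V] (G : SimpleGraph V) : Prop :=
  ∀ v : V, ∃ (a b : ↥(G.neighborSet v))
    (p : (G.induce (G.neighborSet v)).Walk a b), p.IsHamiltonian

/-- An edge `uv` of `H` is suitable if `H[N(u)]` has a Hamilton path ending at `v`
and `H[N(v)]` has a Hamilton path ending at `u`. -/
def SuitableEdge {V : Type*} [DecidableEq V] (H : SimpleGraph V) (u v : V) : Prop :=
  ∃ h : H.Adj u v,
    (∃ (a : ↥(H.neighborSet u)) (p : (H.induce (H.neighborSet u)).Walk a ⟨v, h⟩),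
      p.IsHamiltonian) ∧
    (∃ (a : ↥(H.neighborSet v)) (p : (H.induce (H.neighborSet v)).Walk a ⟨u, h.symm⟩),
      p.IsHamiltonian)



open SimpleGraph Set Function

attribute [local instance 2000] instBEqOfDecidableEq

section Helpers

variable {W X : Type*} [DecidableEq W] [DecidableEq X]

private lemma map_induce_walk {G₁ : SimpleGraph W} {G : SimpleGraph X}
    {S₁ : Set W} {S : Set X} {g : W → X}
    (hmem : ∀ x ∈ S₁, g x ∈ S)
    (hAdj : ∀ x y, x ∈ S₁ → y ∈ S₁ → G₁.Adj x y → G.Adj (g x) (g y))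
    {a b : ↥S₁} (p : (G₁.induce S₁).Walk a b) :
    ∃ q : (G.induce S).Walk ⟨g a.1, hmem a.1 a.2⟩ ⟨g b.1, hmem b.1 b.2⟩,
      q.support.map Subtype.val = p.support.map (fun z => g z.1) := by
  let φ : G₁.induce S₁ →g G.induce S :=
    ⟨fun x => ⟨g x.1, hmem x.1 x.2⟩, fun {x y} h => hAdj _ _ x.2 y.2 h⟩
  refine ⟨p.map φ, ?_⟩
  rw [SimpleGraph.Walk.support_map, List.map_map]
  rfl

private lemma count_val {S : Set X} {l : List ↥S} (c : ↥S) :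
    l.count c = (l.map Subtype.val).count c.1 :=
  (List.count_map_of_injective _ _ Subtype.val_injective _).symm

private lemma pullback_walk {G₁ : SimpleGraph W} {G : SimpleGraph X} {f : W → X}
    (hinj : Function.Injective f)
    (hpull : ∀ x y : W, G.Adj (f x) (f y) → G₁.Adj x y) :
    ∀ {c d : X} (p : G.Walk c d), (∀ x ∈ p.support, x ∈ Set.range f) →
      ∀ a b : W, f a = c → f b = d → ∃ q : G₁.Walk a b, q.support.map f = p.support := by
  intro c d p
  induction p with
  | nil =>
    intro _ a b ha hb
    obtain rfl : a = b := hinj (ha.trans hb.symm)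
    exact ⟨.nil, by simp [ha]⟩
  | @cons c x d h p ih =>
    intro hs a b ha hb
    obtain ⟨a', rfl⟩ := hs x (by simp)
    obtain ⟨q, hq⟩ := ih (fun z hz => hs z (by simp [hz])) a' b rfl hb
    subst ha
    exact ⟨.cons (hpull a a' h) q, by simp [hq]⟩

private lemma confine {G : SimpleGraph X} {R : Set X} {s t : X}
    (hstep : ∀ x y, G.Adj x y → x ∈ R → x ≠ s → x ≠ t → y ∈ R) :
    ∀ {a b : X} (w : G.Walk a b), a ∈ R →
      (∀ z ∈ w.support.dropLast, z ≠ s ∧ z ≠ t) → ∀ z ∈ w.support, z ∈ R := by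
  intro a b w
  induction w with
  | nil =>
    intro ha _ z hz
    simp only [SimpleGraph.Walk.support_nil, List.mem_singleton] at hz
    subst hz; exact ha
  | @cons a x b h w ih =>
    intro ha hdl z hz
    have hdla : (SimpleGraph.Walk.cons h w).support.dropLast = a :: w.support.dropLast := by
      rw [SimpleGraph.Walk.support_cons, w.support_eq_cons]
      rfl
    have ha' := hdl a (by rw [hdla]; exact List.mem_cons_self)
    have hx : x ∈ R := hstep a x h ha ha'.1 ha'.2
    rw [SimpleGraph.Walk.support_cons, List.mem_cons] at hz
    rcases hz with rfl | hz
    · exact ha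
    · exact ih hx (fun z hz => hdl z (by rw [hdla]; exact List.mem_cons_of_mem _ hz)) z hz

private lemma getLast_not_mem_dropLast {l : List X} (hl : l ≠ []) {a : X}
    (hlast : l.getLast hl = a) (hcount : l.count a = 1) : a ∉ l.dropLast := by
  intro hmem
  have h1 : l.dropLast ++ [a] = l := by rw [← hlast]; exact List.dropLast_append_getLast hl
  have h2 : l.count a = l.dropLast.count a + 1 := by
    conv_lhs => rw [← h1]
    simp
  have := List.count_pos_iff.2 hmem
  omega

private lemma not_edge_head_end {G₁ : SimpleGraph W} {a b : W} (r : G₁.Walk a b)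
    (hr : r.IsPath) (hlen : r.length ≠ 1) : s(a, b) ∉ r.edges := by
  cases r with
  | nil => simp
  | @cons _ x _ h r' =>
    intro hmem
    rw [SimpleGraph.Walk.edges_cons, List.mem_cons] at hmem
    rw [SimpleGraph.Walk.cons_isPath_iff] at hr
    rcases hmem with heq | hmem
    · rw [Sym2.eq_iff] at heq
      rcases heq with ⟨-, rfl⟩ | ⟨rfl, rfl⟩
      · -- r' : Walk b b is a path, hence nil
        have : r' = SimpleGraph.Walk.nil := by
          have := SimpleGraph.Path.loop_eq ⟨r', hr.1⟩
          simpa [SimpleGraph.Path.nil] using congrArg Subtype.val this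
        subst this
        simp at hlen
      · exact hr.2 r'.start_mem_support
    · exact hr.2 (r'.fst_mem_support_of_mem_edges hmem)

private lemma ham_cycle_of_path {G₁ : SimpleGraph W} [Fintype W] (hcard : 3 ≤ Fintype.card W)
    {u v : W} (hadj : G₁.Adj u v) (q : G₁.Walk u v) (hq : q.IsHamiltonian) :
    ∃ a, ∃ p : G₁.Walk a a, p.IsHamiltonianCycle := by
  refine ⟨v, .cons hadj.symm q, ?_⟩
  rw [SimpleGraph.Walk.isHamiltonianCycle_iff_isCycle_and_support_count_tail_eq_one]
  constructor
  · rw [SimpleGraph.Walk.cons_isCycle_iff]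
    refine ⟨hq.isPath, ?_⟩
    have hlen : q.length ≠ 1 := by have := hq.length_eq; omega
    rw [Sym2.eq_swap]
    exact not_edge_head_end q hq.isPath hlen
  · intro a
    simpa using hq a

private lemma exists_third [Fintype W] (h : 3 ≤ Fintype.card W) (u v : W) :
    ∃ x, x ≠ u ∧ x ≠ v := by
  by_contra hx
  push_neg at hx
  have hsub : (Finset.univ : Finset W) ⊆ {u, v} := by
    intro x _
    rcases eq_or_ne x u with rfl | hxu
    · simp
    · simp [hx x hxu]
  have := Finset.card_le_card hsub
  have h2 : ({u, v} : Finset W).card ≤ 2 :=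
    (Finset.card_insert_le _ _).trans (by simp)
  rw [Finset.card_univ] at this
  omega

end Helpers

section Parts

variable {V₁ V₂ V : Type*} [Fintype V₁] [Fintype V₂] [Fintype V]
    [DecidableEq V₁] [DecidableEq V₂] [DecidableEq V]
    {G₁ : SimpleGraph V₁} {G₂ : SimpleGraph V₂} {G : SimpleGraph V}
    {u₁ v₁ : V₁} {u₂ v₂ : V₂} {f₁ : V₁ → V} {f₂ : V₂ → V}

/-- local traceability of `G` at `f₁ w` for non-shared `w`. -/
private lemma part1_nonshared
    (hLT₁ : LocallyTraceable G₁)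
    (hf₁ : Function.Injective f₁)
    (hmeet : Set.range f₁ ∩ Set.range f₂ = {f₁ u₁, f₁ v₁})
    (hadj : ∀ a b : V, G.Adj a b ↔
      ((∃ x y : V₁, G₁.Adj x y ∧ f₁ x = a ∧ f₁ y = b) ∨
       (∃ x y : V₂, G₂.Adj x y ∧ f₂ x = a ∧ f₂ y = b)))
    (w : V₁) (hwu : w ≠ u₁) (hwv : w ≠ v₁) :
    ∃ (a b : ↥(G.neighborSet (f₁ w)))
      (p : (G.induce (G.neighborSet (f₁ w))).Walk a b), p.IsHamiltonian := by
  obtain ⟨a, b, p, hp⟩ := hLT₁ w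
  have hmem : ∀ x ∈ G₁.neighborSet w, f₁ x ∈ G.neighborSet (f₁ w) := by
    intro x hx
    exact (hadj _ _).2 (Or.inl ⟨w, x, hx, rfl, rfl⟩)
  have hAdj : ∀ x y, x ∈ G₁.neighborSet w → y ∈ G₁.neighborSet w →
      G₁.Adj x y → G.Adj (f₁ x) (f₁ y) := by
    intro x y _ _ hxy
    exact (hadj _ _).2 (Or.inl ⟨x, y, hxy, rfl, rfl⟩)
  obtain ⟨q, hq⟩ := map_induce_walk hmem hAdj p
  refine ⟨_, _, q, ?_⟩
  intro c
  -- c.1 is of the form f₁ y with y ∈ N₁(w)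
  obtain ⟨y, hy, hcy⟩ : ∃ y ∈ G₁.neighborSet w, f₁ y = c.1 := by
    rcases (hadj _ _).1 c.2 with ⟨x, y, hxy, hxw, hyc⟩ | ⟨x, y, hxy, hxw, hyc⟩
    · obtain rfl : x = w := hf₁ hxw
      exact ⟨y, hxy, hyc⟩
    · exfalso
      have : f₁ w ∈ Set.range f₁ ∩ Set.range f₂ := ⟨⟨w, rfl⟩, ⟨x, hxw⟩⟩
      rw [hmeet] at this
      rcases this with h | h
      · exact hwu (hf₁ h)
      · exact hwv (hf₁ h)
  have e1 : q.support.count c = (p.support.map (fun z => f₁ z.1)).count c.1 := by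
    rw [← hq]; exact count_val c
  have e2 : (p.support.map (fun z => f₁ z.1)).count c.1 = 1 := by
    rw [← hcy]
    have h := List.count_map_of_injective p.support (fun z : ↥(G₁.neighborSet w) => f₁ z.1)
      (hf₁.comp Subtype.val_injective) ⟨y, hy⟩
    simpa using h.trans (hp ⟨y, hy⟩)
  rw [e1, e2]

/-- local traceability of `G` at the shared vertex `f₁ u₁`. -/
private lemma part1_shared
    (hf₁ : Function.Injective f₁) (hf₂ : Function.Injective f₂)
    (hmeet : Set.range f₁ ∩ Set.range f₂ = {f₁ u₁, f₁ v₁})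
    (hu : f₁ u₁ = f₂ u₂) (hv : f₁ v₁ = f₂ v₂)
    (hadj : ∀ a b : V, G.Adj a b ↔
      ((∃ x y : V₁, G₁.Adj x y ∧ f₁ x = a ∧ f₁ y = b) ∨
       (∃ x y : V₂, G₂.Adj x y ∧ f₂ x = a ∧ f₂ y = b)))
    (h11 : G₁.Adj u₁ v₁) (h22 : G₂.Adj u₂ v₂)
    (hp₁ : ∃ (a : ↥(G₁.neighborSet u₁))
      (p : (G₁.induce (G₁.neighborSet u₁)).Walk a ⟨v₁, h11⟩), p.IsHamiltonian)
    (hp₂ : ∃ (a : ↥(G₂.neighborSet u₂))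
      (p : (G₂.induce (G₂.neighborSet u₂)).Walk a ⟨v₂, h22⟩), p.IsHamiltonian) :
    ∃ (a b : ↥(G.neighborSet (f₁ u₁)))
      (p : (G.induce (G.neighborSet (f₁ u₁))).Walk a b), p.IsHamiltonian := by
  obtain ⟨a₁, p₁, hp₁⟩ := hp₁
  obtain ⟨a₂, p₂, hp₂⟩ := hp₂
  set S : Set V := G.neighborSet (f₁ u₁) with hS
  have hmem₁ : ∀ x ∈ G₁.neighborSet u₁, f₁ x ∈ S := by
    intro x hx
    exact (hadj _ _).2 (Or.inl ⟨u₁, x, hx, rfl, rfl⟩)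
  have hmem₂ : ∀ x ∈ G₂.neighborSet u₂, f₂ x ∈ S := by
    intro x hx
    exact (hadj _ _).2 (Or.inr ⟨u₂, x, hx, hu.symm, rfl⟩)
  have hAdj₁ : ∀ x y, x ∈ G₁.neighborSet u₁ → y ∈ G₁.neighborSet u₁ →
      G₁.Adj x y → G.Adj (f₁ x) (f₁ y) := fun x y _ _ hxy =>
    (hadj _ _).2 (Or.inl ⟨x, y, hxy, rfl, rfl⟩)
  have hAdj₂ : ∀ x y, x ∈ G₂.neighborSet u₂ → y ∈ G₂.neighborSet u₂ →
      G₂.Adj x y → G.Adj (f₂ x) (f₂ y) := fun x y _ _ hxy =>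
    (hadj _ _).2 (Or.inr ⟨x, y, hxy, rfl, rfl⟩)
  obtain ⟨q₁, hq₁⟩ := map_induce_walk hmem₁ hAdj₁ p₁
  obtain ⟨q₂, hq₂⟩ := map_induce_walk hmem₂ hAdj₂ p₂
  -- the common end vertex
  have hvv : (⟨f₂ v₂, hmem₂ v₂ h22⟩ : ↥S) = ⟨f₁ v₁, hmem₁ v₁ h11⟩ := Subtype.ext hv.symm
  refine ⟨_, _, q₁.append ((q₂.reverse).copy hvv rfl), ?_⟩
  intro c
  have hsupp : (q₁.append ((q₂.reverse).copy hvv rfl)).support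
      = q₁.support ++ q₂.support.reverse.tail := by
    rw [SimpleGraph.Walk.support_append, SimpleGraph.Walk.support_copy,
      SimpleGraph.Walk.support_reverse]
  rw [hsupp, List.count_append]
  -- head of the reversed support
  have hrev : q₂.support.reverse = (⟨f₂ v₂, hmem₂ v₂ h22⟩ : ↥S) :: q₂.support.reverse.tail := by
    rw [← SimpleGraph.Walk.support_reverse]
    exact q₂.reverse.support_eq_cons
  -- counts in q₁ and q₂
  have hc₁ : ∀ d : ↥S, (∀ x ∈ G₁.neighborSet u₁, f₁ x ≠ d.1) → q₁.support.count d = 0 := by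
    intro d hd
    rw [count_val d, hq₁, List.count_eq_zero]
    intro hmem
    obtain ⟨z, hz, hzc⟩ := List.mem_map.1 hmem
    exact hd z.1 z.2 hzc
  have hc₁' : ∀ (x : V₁) (hx : x ∈ G₁.neighborSet u₁) (d : ↥S), f₁ x = d.1 →
      q₁.support.count d = 1 := by
    intro x hx d hxd
    rw [count_val d, hq₁, ← hxd]
    have h := List.count_map_of_injective p₁.support (fun z : ↥(G₁.neighborSet u₁) => f₁ z.1)
      (hf₁.comp Subtype.val_injective) ⟨x, hx⟩
    simpa using h.trans (hp₁ ⟨x, hx⟩)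
  have hc₂ : ∀ d : ↥S, (∀ x ∈ G₂.neighborSet u₂, f₂ x ≠ d.1) → q₂.support.count d = 0 := by
    intro d hd
    rw [count_val d, hq₂, List.count_eq_zero]
    intro hmem
    obtain ⟨z, hz, hzc⟩ := List.mem_map.1 hmem
    exact hd z.1 z.2 hzc
  have hc₂' : ∀ (x : V₂) (hx : x ∈ G₂.neighborSet u₂) (d : ↥S), f₂ x = d.1 →
      q₂.support.count d = 1 := by
    intro x hx d hxd
    rw [count_val d, hq₂, ← hxd]
    have h := List.count_map_of_injective p₂.support (fun z : ↥(G₂.neighborSet u₂) => f₂ z.1)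
      (hf₂.comp Subtype.val_injective) ⟨x, hx⟩
    simpa using h.trans (hp₂ ⟨x, hx⟩)
  -- c comes from one of the sides
  have hside : (∃ x ∈ G₁.neighborSet u₁, f₁ x = c.1) ∨ (∃ x ∈ G₂.neighborSet u₂, f₂ x = c.1) := by
    rcases (hadj _ _).1 c.2 with ⟨x, y, hxy, hxw, hyc⟩ | ⟨x, y, hxy, hxw, hyc⟩
    · obtain rfl : x = u₁ := hf₁ hxw
      exact Or.inl ⟨y, hxy, hyc⟩
    · obtain rfl : x = u₂ := hf₂ (hxw.trans hu)
      exact Or.inr ⟨y, hxy, hyc⟩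
  -- key disjointness: if c.1 is in both images then c = (⟨f₁ v₁, hmem₁ v₁ h11⟩ : ↥S)
  have hboth : ∀ (x : V₁), x ∈ G₁.neighborSet u₁ → f₁ x = c.1 →
      ∀ (y : V₂), y ∈ G₂.neighborSet u₂ → f₂ y = c.1 → c = (⟨f₁ v₁, hmem₁ v₁ h11⟩ : ↥S) := by
    intro x hx hxc y hy hyc
    have : c.1 ∈ Set.range f₁ ∩ Set.range f₂ := ⟨⟨x, hxc⟩, ⟨y, hyc⟩⟩
    rw [hmeet] at this
    rcases this with h | h
    · exfalso
      obtain rfl : x = u₁ := hf₁ (hxc.trans h)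
      exact G₁.irrefl hx
    · exact Subtype.ext h
  by_cases hcvv : c = (⟨f₁ v₁, hmem₁ v₁ h11⟩ : ↥S)
  · -- count in q₁ is 1, count in reverse-tail is 0
    subst hcvv
    have h1 : q₁.support.count (⟨f₁ v₁, hmem₁ v₁ h11⟩ : ↥S) = 1 := hc₁' v₁ h11 (⟨f₁ v₁, hmem₁ v₁ h11⟩ : ↥S) rfl
    have h2 : q₂.support.count (⟨f₂ v₂, hmem₂ v₂ h22⟩ : ↥S) = 1 := hc₂' v₂ h22 _ rfl
    have h3 : q₂.support.reverse.count (⟨f₂ v₂, hmem₂ v₂ h22⟩ : ↥S) = 1 := by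
      rw [List.count_reverse]; exact h2
    rw [hrev, List.count_cons_self] at h3
    have h4 : q₂.support.reverse.tail.count (⟨f₂ v₂, hmem₂ v₂ h22⟩ : ↥S)
        = q₂.support.reverse.tail.count (⟨f₁ v₁, hmem₁ v₁ h11⟩ : ↥S) :=
      congrArg (fun d : ↥S => q₂.support.reverse.tail.count d) hvv
    rw [h1]
    omega
  · rcases hside with ⟨x, hx, hxc⟩ | ⟨x, hx, hxc⟩
    · -- c on side 1 only
      have h1 : q₁.support.count c = 1 := hc₁' x hx c hxc
      have h2 : q₂.support.count c = 0 := by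
        refine hc₂ c ?_
        intro y hy hyc
        exact hcvv (hboth x hx hxc y hy hyc)
      have h3 : q₂.support.reverse.tail.count c ≤ 0 := by
        have h4 : q₂.support.reverse.count c = 0 := by rw [List.count_reverse]; exact h2
        rw [← h4]
        exact List.Sublist.count_le c (List.tail_sublist _)
      omega
    · -- c on side 2 only
      have h1 : q₁.support.count c = 0 := by
        refine hc₁ c ?_
        intro y hy hyc
        exact hcvv (hboth y hy hyc x hx hxc)
      have h2 : q₂.support.count c = 1 := hc₂' x hx c hxc
      have hcne : c ≠ (⟨f₂ v₂, hmem₂ v₂ h22⟩ : ↥S) := by rw [hvv]; exact hcvv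
      have h3 : q₂.support.reverse.tail.count c = 1 := by
        have h4 : q₂.support.reverse.count c = 1 := by rw [List.count_reverse]; exact h2
        rw [hrev, List.count_cons_of_ne hcne.symm] at h4
        exact h4
      omega

/-- Hamiltonicity descends to side 1. -/
private lemma part2
    (h₁ : 3 ≤ Fintype.card V₁) (h₂ : 3 ≤ Fintype.card V₂)
    (h11 : G₁.Adj u₁ v₁) (h22 : G₂.Adj u₂ v₂)
    (hf₁ : Function.Injective f₁) (hf₂ : Function.Injective f₂)
    (hcover : Set.range f₁ ∪ Set.range f₂ = Set.univ)
    (hmeet : Set.range f₁ ∩ Set.range f₂ = {f₁ u₁, f₁ v₁})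
    (hu : f₁ u₁ = f₂ u₂) (hv : f₁ v₁ = f₂ v₂)
    (hadj : ∀ a b : V, G.Adj a b ↔
      ((∃ x y : V₁, G₁.Adj x y ∧ f₁ x = a ∧ f₁ y = b) ∨
       (∃ x y : V₂, G₂.Adj x y ∧ f₂ x = a ∧ f₂ y = b)))
    (hG : G.IsHamiltonian) : G₁.IsHamiltonian := by
  intro _
  set s : V := f₁ u₁ with hsdef
  set t : V := f₁ v₁ with htdef
  have hst : s ≠ t := fun h => h11.ne (hf₁ h)
  have hsr2 : s ∈ Set.range f₂ := ⟨u₂, hu.symm⟩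
  have htr2 : t ∈ Set.range f₂ := ⟨v₂, hv.symm⟩
  -- pulling back adjacency to G₁
  have hpull₁ : ∀ x y : V₁, G.Adj (f₁ x) (f₁ y) → G₁.Adj x y := by
    intro x y hxy
    have hne : x ≠ y := fun h => hxy.ne (congrArg f₁ h)
    rcases (hadj _ _).1 hxy with ⟨x', y', hxy', hx', hy'⟩ | ⟨a, b, hab, ha, hb⟩
    · obtain rfl : x' = x := hf₁ hx'
      obtain rfl : y' = y := hf₁ hy'
      exact hxy'
    · have hxm : f₁ x ∈ Set.range f₁ ∩ Set.range f₂ := ⟨⟨x, rfl⟩, ⟨a, ha⟩⟩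
      have hym : f₁ y ∈ Set.range f₁ ∩ Set.range f₂ := ⟨⟨y, rfl⟩, ⟨b, hb⟩⟩
      rw [hmeet] at hxm hym
      rcases hxm with hx1 | hx1 <;> rcases hym with hy1 | hy1 <;>
        [skip; skip; skip; skip]
      · exact absurd (hf₁ (hx1.trans hy1.symm)) hne
      · obtain rfl : x = u₁ := hf₁ hx1
        obtain rfl : y = v₁ := hf₁ hy1
        exact h11
      · obtain rfl : x = v₁ := hf₁ hx1
        obtain rfl : y = u₁ := hf₁ hy1
        exact h11.symm
      · exact absurd (hf₁ (hx1.trans hy1.symm)) hne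
  -- only the shared vertices are in both ranges
  have honly₁ : ∀ x : V₁, f₁ x ∈ Set.range f₂ → x = u₁ ∨ x = v₁ := by
    intro x hx
    have : f₁ x ∈ Set.range f₁ ∩ Set.range f₂ := ⟨⟨x, rfl⟩, hx⟩
    rw [hmeet] at this
    rcases this with h | h
    · exact Or.inl (hf₁ h)
    · exact Or.inr (hf₁ h)
  have honly₂ : ∀ x : V₂, f₂ x ∈ Set.range f₁ → f₂ x = s ∨ f₂ x = t := by
    intro x hx
    have : f₂ x ∈ Set.range f₁ ∩ Set.range f₂ := ⟨hx, ⟨x, rfl⟩⟩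
    rw [hmeet] at this
    exact this
  -- step lemmas for confinement
  have hstep₁ : ∀ x y, G.Adj x y → x ∈ Set.range f₁ → x ≠ s → x ≠ t → y ∈ Set.range f₁ := by
    intro x y hxy hx hxs hxt
    rcases (hadj _ _).1 hxy with ⟨x', y', _, _, hy'⟩ | ⟨a, b, _, ha, _⟩
    · exact ⟨y', hy'⟩
    · exfalso
      have : x ∈ Set.range f₁ ∩ Set.range f₂ := ⟨hx, ⟨a, ha⟩⟩
      rw [hmeet] at this
      rcases this with h | h
      · exact hxs h
      · exact hxt h
  have hstep₂ : ∀ x y, G.Adj x y → x ∈ Set.range f₂ → x ≠ s → x ≠ t → y ∈ Set.range f₂ := by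
    intro x y hxy hx hxs hxt
    rcases (hadj _ _).1 hxy with ⟨a, b, _, ha, _⟩ | ⟨a, b, _, _, hb⟩
    · exfalso
      have : x ∈ Set.range f₁ ∩ Set.range f₂ := ⟨⟨a, ha⟩, hx⟩
      rw [hmeet] at this
      rcases this with h | h
      · exact hxs h
      · exact hxt h
    · exact ⟨b, hb⟩
  -- get a Hamiltonian cycle of G based at s
  have hcV : 3 ≤ Fintype.card V := h₁.trans (Fintype.card_le_of_injective f₁ hf₁)
  obtain ⟨r₀, c₀, hc₀⟩ := hG (by omega)
  have hsmem : s ∈ c₀.support := hc₀.mem_support s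
  set c : G.Walk s s := c₀.rotate s hsmem with hcdef
  have hc : c.IsHamiltonianCycle := by
    rw [SimpleGraph.Walk.isHamiltonianCycle_iff_isCycle_and_support_count_tail_eq_one] at *
    refine ⟨hc₀.1.rotate hsmem, fun a => ?_⟩
    rw [(SimpleGraph.Walk.support_rotate c₀ s hsmem).perm.count_eq]
    exact hc₀.2 a
  have ht : t ∈ c.support := hc.mem_support t
  set p : G.Walk s t := c.takeUntil t ht with hpdef
  set q : G.Walk t s := c.dropUntil t ht with hqdef
  have hsupc : c.support = p.support ++ q.support.tail := by
    conv_lhs => rw [← c.take_spec ht]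
    rw [SimpleGraph.Walk.support_append]
  -- counts
  have hct : c.support.count t = 1 := hc.support_count_of_ne hst
  have hcs : c.support.count s = 2 := hc.count_support_self
  have hpt : p.support.count t = 1 := c.count_support_takeUntil_eq_one ht
  have hqt : q.support.tail.count t = 0 := by
    have := hct; rw [hsupc, List.count_append] at this; omega
  have hq_supp_count : q.support.count s = q.support.tail.count s := by
    conv_lhs => rw [q.support_eq_cons]
    rw [List.count_cons_of_ne hst.symm]
  have hps_pos : 1 ≤ p.support.count s := List.count_pos_iff.2 p.start_mem_support
  have hqs_pos : 1 ≤ q.support.tail.count s := by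
    rw [← hq_supp_count]
    exact List.count_pos_iff.2 q.end_mem_support
  have hsplit_s : p.support.count s + q.support.tail.count s = 2 := by
    rw [← List.count_append, ← hsupc]; exact hcs
  have hps : p.support.count s = 1 := by omega
  have hqs : q.support.tail.count s = 1 := by omega
  have hqsup_t : q.support.count t = 1 := by
    rw [q.support_eq_cons, List.count_cons_self, hqt]
  have hqsup_s : q.support.count s = 1 := by
    rw [q.support_eq_cons, List.count_cons_of_ne hst.symm]
    omega
  -- generic count bound in c
  have hcount_le : ∀ z : V, z ≠ s → c.support.count z ≤ 1 := by
    intro z hz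
    exact le_of_eq (hc.support_count_of_ne (fun h => hz h.symm))
  have hpnodup : p.support.Nodup := by
    rw [List.nodup_iff_count_le_one]
    intro z
    rcases eq_or_ne z s with rfl | hz
    · omega
    · have := hcount_le z hz
      rw [hsupc, List.count_append] at this
      omega
  have hqnodup : q.support.Nodup := by
    rw [List.nodup_iff_count_le_one]
    intro z
    rcases eq_or_ne z t with rfl | hzt
    · omega
    rcases eq_or_ne z s with rfl | hzs
    · omega
    · have h3 := hcount_le z hzs
      rw [hsupc, List.count_append] at h3
      rw [q.support_eq_cons, List.count_cons_of_ne hzt.symm]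
      omega
  -- interiors avoid s and t
  clear_value p q
  obtain ⟨x₀, hadj0, p', rfl⟩ := SimpleGraph.Walk.exists_eq_cons_of_ne hst p
  obtain ⟨y₀, hadj0q, q', rfl⟩ := SimpleGraph.Walk.exists_eq_cons_of_ne hst.symm q
  have hpsup : (SimpleGraph.Walk.cons hadj0 p').support = s :: p'.support := by
    rw [SimpleGraph.Walk.support_cons]
  have hqsup : (SimpleGraph.Walk.cons hadj0q q').support = t :: q'.support := by
    rw [SimpleGraph.Walk.support_cons]
  have hp'_s : s ∉ p'.support := by
    have : p'.support.count s = 0 := by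
      have := hps
      rw [hpsup, List.count_cons_self] at this
      omega
    rw [← List.count_pos_iff]
    omega
  have hp'_dl_t : ∀ z ∈ p'.support.dropLast, z ≠ t := by
    have hne : (SimpleGraph.Walk.cons hadj0 p').support ≠ [] :=
      (SimpleGraph.Walk.cons hadj0 p').support_ne_nil
    have hlast : (SimpleGraph.Walk.cons hadj0 p').support.getLast hne = t := by
      exact (SimpleGraph.Walk.cons hadj0 p').getLast_support
    have hnm := getLast_not_mem_dropLast hne hlast hpt
    intro z hz heq
    subst heq
    apply hnm
    have hdla : (SimpleGraph.Walk.cons hadj0 p').support.dropLast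
        = s :: p'.support.dropLast := by
      rw [hpsup, p'.support_eq_cons]; rfl
    rw [hdla]
    exact List.mem_cons_of_mem _ hz
  have hp'_int : ∀ z ∈ p'.support.dropLast, z ≠ s ∧ z ≠ t := by
    intro z hz
    exact ⟨fun h => hp'_s (h ▸ (List.dropLast_subset _ hz)), hp'_dl_t z hz⟩
  have hq'_t : t ∉ q'.support := by
    have : q'.support.count t = 0 := by
      have := hqsup_t
      rw [hqsup, List.count_cons_self] at this
      omega
    rw [← List.count_pos_iff]
    omega
  have hq'_dl_s : ∀ z ∈ q'.support.dropLast, z ≠ s := by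
    have hne : (SimpleGraph.Walk.cons hadj0q q').support ≠ [] :=
      (SimpleGraph.Walk.cons hadj0q q').support_ne_nil
    have hlast : (SimpleGraph.Walk.cons hadj0q q').support.getLast hne = s := by
      exact (SimpleGraph.Walk.cons hadj0q q').getLast_support
    have hnm := getLast_not_mem_dropLast hne hlast hqsup_s
    intro z hz heq
    subst heq
    apply hnm
    have hdla : (SimpleGraph.Walk.cons hadj0q q').support.dropLast
        = t :: q'.support.dropLast := by
      rw [hqsup, q'.support_eq_cons]; rfl
    rw [hdla]
    exact List.mem_cons_of_mem _ hz
  have hq'_int : ∀ z ∈ q'.support.dropLast, z ≠ s ∧ z ≠ t := by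
    intro z hz
    exact ⟨hq'_dl_s z hz, fun h => hq'_t (h ▸ (List.dropLast_subset _ hz))⟩
  -- side confinement
  have hcover' : ∀ z : V, z ∈ Set.range f₁ ∨ z ∈ Set.range f₂ := by
    intro z
    have : z ∈ Set.range f₁ ∪ Set.range f₂ := by rw [hcover]; trivial
    exact this
  have hpside : (∀ z ∈ (SimpleGraph.Walk.cons hadj0 p').support, z ∈ Set.range f₁) ∨
      (∀ z ∈ (SimpleGraph.Walk.cons hadj0 p').support, z ∈ Set.range f₂) := by
    rcases hcover' x₀ with hx | hx
    · left
      intro z hz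
      rw [hpsup, List.mem_cons] at hz
      rcases hz with rfl | hz
      · exact ⟨u₁, rfl⟩
      · exact confine hstep₁ p' hx hp'_int z hz
    · right
      intro z hz
      rw [hpsup, List.mem_cons] at hz
      rcases hz with rfl | hz
      · exact hsr2
      · exact confine hstep₂ p' hx hp'_int z hz
  have hqside : (∀ z ∈ (SimpleGraph.Walk.cons hadj0q q').support, z ∈ Set.range f₁) ∨
      (∀ z ∈ (SimpleGraph.Walk.cons hadj0q q').support, z ∈ Set.range f₂) := by
    rcases hcover' y₀ with hy | hy
    · left
      intro z hz
      rw [hqsup, List.mem_cons] at hz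
      rcases hz with rfl | hz
      · exact ⟨v₁, rfl⟩
      · exact confine hstep₁ q' hy hq'_int z hz
    · right
      intro z hz
      rw [hqsup, List.mem_cons] at hz
      rcases hz with rfl | hz
      · exact htr2
      · exact confine hstep₂ q' hy hq'_int z hz
  -- witnesses off the shared vertices
  obtain ⟨x₁, hx₁u, hx₁v⟩ := exists_third h₁ u₁ v₁
  obtain ⟨x₂, hx₂u, hx₂v⟩ := exists_third h₂ u₂ v₂
  have hw₁ : f₁ x₁ ∉ Set.range f₂ := by
    intro hmem
    rcases honly₁ x₁ hmem with h | h
    · exact hx₁u h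
    · exact hx₁v h
  have hw₂ : f₂ x₂ ∉ Set.range f₁ := by
    intro hmem
    rcases honly₂ x₂ hmem with h | h
    · exact hx₂u (hf₂ (h.trans hu))
    · exact hx₂v (hf₂ (h.trans hv))
  have hw₁c : f₁ x₁ ∈ c.support := hc.mem_support _
  have hw₂c : f₂ x₂ ∈ c.support := hc.mem_support _
  -- main case split
  rcases hpside with hpR | hpR
  · -- p in side 1, so q must be in side 2
    have hqR : ∀ z ∈ (SimpleGraph.Walk.cons hadj0q q').support, z ∈ Set.range f₂ := by
      rcases hqside with hq1 | hq2
      · exfalso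
        rw [hsupc, List.mem_append] at hw₂c
        rcases hw₂c with h | h
        · exact hw₂ (hpR _ h)
        · exact hw₂ (hq1 _ (List.mem_of_mem_tail (by
            rw [(SimpleGraph.Walk.cons hadj0q q').support_eq_cons]; exact h)))
      · exact hq2
    -- coverage: every f₁ x is in p.support
    have hcov : ∀ x : V₁, f₁ x ∈ (SimpleGraph.Walk.cons hadj0 p').support := by
      intro x
      rcases eq_or_ne x u₁ with rfl | hxu
      · exact (SimpleGraph.Walk.cons hadj0 p').start_mem_support
      rcases eq_or_ne x v₁ with rfl | hxv
      · exact (SimpleGraph.Walk.cons hadj0 p').end_mem_support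
      have hmc : f₁ x ∈ c.support := hc.mem_support _
      rw [hsupc, List.mem_append] at hmc
      rcases hmc with h | h
      · exact h
      · exfalso
        have : f₁ x ∈ Set.range f₂ := hqR _ (List.mem_of_mem_tail (by
          rw [(SimpleGraph.Walk.cons hadj0q q').support_eq_cons]; exact h))
        rcases honly₁ x this with h' | h'
        · exact hxu h'
        · exact hxv h'
    obtain ⟨r, hr⟩ := pullback_walk hf₁ hpull₁ (SimpleGraph.Walk.cons hadj0 p') hpR u₁ v₁ rfl rfl
    have hrham : r.IsHamiltonian := by
      intro x
      have : r.support.count x = (SimpleGraph.Walk.cons hadj0 p').support.count (f₁ x) := by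
        rw [← hr, List.count_map_of_injective _ _ hf₁]
      rw [this]
      have h1 : 1 ≤ (SimpleGraph.Walk.cons hadj0 p').support.count (f₁ x) :=
        List.count_pos_iff.2 (hcov x)
      have h2 := List.nodup_iff_count_le_one.1 hpnodup (f₁ x)
      omega
    exact ham_cycle_of_path h₁ h11 r hrham
  · -- p in side 2, so q must be in side 1
    have hqR : ∀ z ∈ (SimpleGraph.Walk.cons hadj0q q').support, z ∈ Set.range f₁ := by
      rcases hqside with hq1 | hq2
      · exact hq1
      · exfalso
        rw [hsupc, List.mem_append] at hw₁c
        rcases hw₁c with h | h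
        · exact hw₁ (hpR _ h)
        · exact hw₁ (hq2 _ (List.mem_of_mem_tail (by
            rw [(SimpleGraph.Walk.cons hadj0q q').support_eq_cons]; exact h)))
    have hcov : ∀ x : V₁, f₁ x ∈ (SimpleGraph.Walk.cons hadj0q q').support := by
      intro x
      rcases eq_or_ne x u₁ with rfl | hxu
      · exact (SimpleGraph.Walk.cons hadj0q q').end_mem_support
      rcases eq_or_ne x v₁ with rfl | hxv
      · exact (SimpleGraph.Walk.cons hadj0q q').start_mem_support
      have hmc : f₁ x ∈ c.support := hc.mem_support _
      rw [hsupc, List.mem_append] at hmc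
      rcases hmc with h | h
      · exfalso
        have : f₁ x ∈ Set.range f₂ := hpR _ h
        rcases honly₁ x this with h' | h'
        · exact hxu h'
        · exact hxv h'
      · exact List.mem_of_mem_tail (by
          rw [(SimpleGraph.Walk.cons hadj0q q').support_eq_cons]; exact h)
    obtain ⟨r, hr⟩ := pullback_walk hf₁ hpull₁ (SimpleGraph.Walk.cons hadj0q q') hqR v₁ u₁ rfl rfl
    have hrham : r.reverse.IsHamiltonian := by
      intro x
      have h0 : r.reverse.support.count x = r.support.count x := by
        rw [SimpleGraph.Walk.support_reverse, List.count_reverse]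
      have : r.support.count x = (SimpleGraph.Walk.cons hadj0q q').support.count (f₁ x) := by
        rw [← hr, List.count_map_of_injective _ _ hf₁]
      rw [h0, this]
      have h1 : 1 ≤ (SimpleGraph.Walk.cons hadj0q q').support.count (f₁ x) :=
        List.count_pos_iff.2 (hcov x)
      have h2 := List.nodup_iff_count_le_one.1 hqnodup (f₁ x)
      omega
    exact ham_cycle_of_path h₁ h11 r.reverse hrham

end Parts

/-- If `G` is obtained from locally traceable graphs `G₁` and `G₂` (each of order
at least `3`) by identifying a suitable edge `u₁v₁` of `G₁` with a suitable edge
`u₂v₂` of `G₂`, then `G` is locally traceable, and if `G` is hamiltonian then so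
are `G₁` and `G₂`. The identification is expressed via injections `f₁, f₂` whose
images cover `V`, meet exactly in the identified edge ends, and carry precisely
the edges of `G₁` and `G₂` onto the edges of `G`. -/
theorem stmt_19 {V₁ V₂ V : Type*} [Fintype V₁] [Fintype V₂] [Fintype V]
    [DecidableEq V₁] [DecidableEq V₂] [DecidableEq V]
    (G₁ : SimpleGraph V₁) (G₂ : SimpleGraph V₂) (G : SimpleGraph V)
    (h₁ : 3 ≤ Fintype.card V₁) (h₂ : 3 ≤ Fintype.card V₂)
    (hLT₁ : LocallyTraceable G₁) (hLT₂ : LocallyTraceable G₂)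
    (u₁ v₁ : V₁) (u₂ v₂ : V₂)
    (hs₁ : SuitableEdge G₁ u₁ v₁) (hs₂ : SuitableEdge G₂ u₂ v₂)
    (f₁ : V₁ → V) (f₂ : V₂ → V)
    (hf₁ : Function.Injective f₁) (hf₂ : Function.Injective f₂)
    (hcover : Set.range f₁ ∪ Set.range f₂ = Set.univ)
    (hmeet : Set.range f₁ ∩ Set.range f₂ = {f₁ u₁, f₁ v₁})
    (hu : f₁ u₁ = f₂ u₂) (hv : f₁ v₁ = f₂ v₂)
    (hadj : ∀ a b : V, G.Adj a b ↔
      ((∃ x y : V₁, G₁.Adj x y ∧ f₁ x = a ∧ f₁ y = b) ∨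
       (∃ x y : V₂, G₂.Adj x y ∧ f₂ x = a ∧ f₂ y = b))) :
    LocallyTraceable G ∧
      (G.IsHamiltonian → G₁.IsHamiltonian ∧ G₂.IsHamiltonian) := by
  obtain ⟨h11, hp₁u, hp₁v⟩ := hs₁
  obtain ⟨h22, hp₂u, hp₂v⟩ := hs₂
  have hmeet₂ : Set.range f₂ ∩ Set.range f₁ = {f₂ u₂, f₂ v₂} := by
    rw [Set.inter_comm, hmeet, hu, hv]
  have hadj₂ : ∀ a b : V, G.Adj a b ↔
      ((∃ x y : V₂, G₂.Adj x y ∧ f₂ x = a ∧ f₂ y = b) ∨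
       (∃ x y : V₁, G₁.Adj x y ∧ f₁ x = a ∧ f₁ y = b)) :=
    fun a b => (hadj a b).trans or_comm
  have hmeet₁' : Set.range f₁ ∩ Set.range f₂ = {f₁ v₁, f₁ u₁} := by
    rw [hmeet, Set.pair_comm]
  constructor
  · intro z
    have hz : z ∈ Set.range f₁ ∪ Set.range f₂ := by rw [hcover]; trivial
    rcases hz with ⟨w, rfl⟩ | ⟨w, rfl⟩
    · rcases eq_or_ne w u₁ with rfl | hwu
      · exact part1_shared hf₁ hf₂ hmeet hu hv hadj h11 h22 hp₁u hp₂u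
      rcases eq_or_ne w v₁ with rfl | hwv
      · exact part1_shared hf₁ hf₂ hmeet₁' hv hu hadj h11.symm h22.symm hp₁v hp₂v
      · exact part1_nonshared hLT₁ hf₁ hmeet hadj w hwu hwv
    · rcases eq_or_ne w u₂ with rfl | hwu
      · rw [← hu]
        exact part1_shared hf₁ hf₂ hmeet hu hv hadj h11 h22 hp₁u hp₂u
      rcases eq_or_ne w v₂ with rfl | hwv
      · rw [← hv]
        exact part1_shared hf₁ hf₂ hmeet₁' hv hu hadj h11.symm h22.symm hp₁v hp₂v
      · exact part1_nonshared hLT₂ hf₂ hmeet₂ hadj₂ w hwu hwv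
  · intro hG
    exact ⟨part2 h₁ h₂ h11 h22 hf₁ hf₂ hcover hmeet hu hv hadj hG,
      part2 h₂ h₁ h22 h11 hf₂ hf₁ (by rw [Set.union_comm]; exact hcover) hmeet₂
        hu.symm hv.symm hadj₂ hG⟩
end
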